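/- arXiv:2107.02587 — 4 statements merged into one kernel-verified Lean document; each statement's English description precedes it below -/
import Mathlib

section
/- Let 𝔾 be a linearly ordered abelian group of degree κ, let X be a 𝔾-metrizable space, let (Y,d) be a Cauchy-complete 𝔾-metric space, let A ⊆ X and let f : A → Y be continuous. Then there exist a G_δ^κ set B ⊆ X with A ⊆ B ⊆ cl(A) and a continuous function g : B → Y with g↾A = f. -/
universe u v

open Cardinal Set

namespace GDST

/-- A *limit element* of an order: an element with some predecessor but
no immediate predecessor (i.e. it sits at a limit position). -/
def IsLimitElt {α : Type v} [LT α] (a : α) : Prop :=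
  (∃ b, b < a) ∧ ∀ b, b < a → ∃ c, b < c ∧ c < a

/-- The space `X` has weight at most `κ`: it admits a topological basis of cardinality ≤ κ. -/
def HasWeightLE (κ : Cardinal.{u}) (X : Type u) [TopologicalSpace X] : Prop :=
  ∃ B : Set (Set X), TopologicalSpace.IsTopologicalBasis B ∧ #B ≤ κ

/-- `X` is `κ`-additive: intersections of fewer than `κ` open sets are open. -/
def KAdditive (κ : Cardinal.{u}) (X : Type u) [TopologicalSpace X] : Prop :=
  ∀ S : Set (Set X), #S < κ → (∀ U ∈ S, IsOpen U) → IsOpen (⋂₀ S)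

/-- `X` is `κ`-Lindelöf: every open cover has a subcover of size `< κ`. -/
def KLindelof (κ : Cardinal.{u}) (X : Type u) [TopologicalSpace X] : Prop :=
  ∀ 𝒰 : Set (Set X), (∀ U ∈ 𝒰, IsOpen U) → ⋃₀ 𝒰 = Set.univ →
    ∃ 𝒱 ⊆ 𝒰, #𝒱 < κ ∧ ⋃₀ 𝒱 = Set.univ

/-- `X` is `κ`-perfect: no point `x` is `κ`-isolated, i.e. no `{x}` is an intersection
of fewer than `κ` open sets. -/
def KPerfect (κ : Cardinal.{u}) (X : Type u) [TopologicalSpace X] : Prop :=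
  ∀ x : X, ¬ ∃ S : Set (Set X), #S < κ ∧ (∀ U ∈ S, IsOpen U) ∧ ⋂₀ S = {x}

/-- `A` is `G_δ^κ` in `X`: an intersection of `κ`-many open sets. -/
def IsGDeltaKappa (κ : Cardinal.{u}) {X : Type u} [TopologicalSpace X] (A : Set X) : Prop :=
  ∃ U : κ.ord.ToType → Set X, (∀ i, IsOpen (U i)) ∧ A = ⋂ i, U i

/-! ### Generalized Baire and Cantor spaces -/

/-- The bounded topology on `ι → A`: generated by the sets of functions with a
prescribed restriction to a proper initial segment `{b | b < a}` of `ι`. -/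
def BoundedTopology (ι : Type u) [LinearOrder ι] (A : Type v) : TopologicalSpace (ι → A) :=
  TopologicalSpace.generateFrom
    {U | ∃ (a : ι) (y : ι → A), U = {x : ι → A | ∀ b, b < a → x b = y b}}

/-- The generalized Baire space `κ^κ`. -/
def GenBaire (κ : Cardinal.{u}) : Type u := κ.ord.ToType → κ.ord.ToType

noncomputable instance (κ : Cardinal.{u}) : TopologicalSpace (GenBaire κ) :=
  BoundedTopology κ.ord.ToType κ.ord.ToType

/-- The generalized Cantor space `2^κ`. -/
def GenCantor (κ : Cardinal.{u}) : Type u := κ.ord.ToType → Bool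

noncomputable instance (κ : Cardinal.{u}) : TopologicalSpace (GenCantor κ) :=
  BoundedTopology κ.ord.ToType Bool

/-! ### The strong and fair (strong) κ-Choquet games -/

/-- A transfinite sequence of moves of player I: at each round a pair `(U, x)`. -/
abbrev IMoves (κ : Cardinal.{u}) (X : Type u) : Type u := κ.ord.ToType → Set X × X

/-- A strategy for player II: given the moves of I (only the moves up to the current
round may be used, see `IsIIStrategy`) and the current round, produce II's move. -/
abbrev Strategy (κ : Cardinal.{u}) (X : Type u) : Type u := IMoves κ X → κ.ord.ToType → Set X

/-- The intersection of the sets played before round `a`. -/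
def InterBelow {ι : Type u} {X : Type u} [LT ι] (V : ι → Set X) (a : ι) : Set X :=
  ⋂ b, ⋂ (_ : b < a), V b

/-- `U` is relatively open in `T`. -/
def RelOpenIn {X : Type u} [TopologicalSpace X] (T U : Set X) : Prop :=
  ∃ W : Set X, IsOpen W ∧ U = W ∩ T

/-- Player I's move at round `a` is legal: `(f a).1` is a nonempty relatively open subset of
the intersection of all previously played sets, and the point `(f a).2` belongs to it. -/
def LegalI {κ : Cardinal.{u}} {X : Type u} [TopologicalSpace X]
    (σ : Strategy κ X) (f : IMoves κ X) (a : κ.ord.ToType) : Prop :=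
  RelOpenIn (InterBelow (σ f) a) (f a).1 ∧ (f a).2 ∈ (f a).1

/-- Player II's answer (by `σ`) at round `a` is legal: it is relatively open in the
intersection of all previously played sets, contains I's point, and is contained in I's set. -/
def LegalII {κ : Cardinal.{u}} {X : Type u} [TopologicalSpace X]
    (σ : Strategy κ X) (f : IMoves κ X) (a : κ.ord.ToType) : Prop :=
  RelOpenIn (InterBelow (σ f) a) (σ f a) ∧ (f a).2 ∈ σ f a ∧ σ f a ⊆ (f a).1

/-- All moves before round `a` were legal. -/
def LegalBelow {κ : Cardinal.{u}} {X : Type u} [TopologicalSpace X]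
    (σ : Strategy κ X) (f : IMoves κ X) (a : κ.ord.ToType) : Prop :=
  ∀ b, b < a → LegalI σ f b ∧ LegalII σ f b

/-- `σ` only depends on the moves of I played so far. -/
def IsIIStrategy {κ : Cardinal.{u}} {X : Type u} (σ : Strategy κ X) : Prop :=
  ∀ f g : IMoves κ X, ∀ a, (∀ b, b ≤ a → f b = g b) → σ f a = σ g a

/-- `σ` is a winning strategy for player II in the strong κ-Choquet game `G^s_κ(X)`:
it answers legally to legal positions, and in any (possibly partial) legal run the
intersection of the played sets at every limit round—including the final one—is nonempty. -/
def WinningStrong {κ : Cardinal.{u}} {X : Type u} [TopologicalSpace X]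
    (σ : Strategy κ X) : Prop :=
  IsIIStrategy σ ∧
  (∀ f a, LegalBelow σ f a → LegalI σ f a → LegalII σ f a) ∧
  (∀ f a, IsLimitElt a → LegalBelow σ f a → (InterBelow (σ f) a).Nonempty) ∧
  (∀ f, (∀ a, LegalI σ f a ∧ LegalII σ f a) → (⋂ a, σ f a).Nonempty)

/-- `σ` is a winning strategy for player II in the fair strong κ-Choquet game `fG^s_κ(X)`:
it answers legally to legal positions, and for every legal run either the intersection of
the played sets is empty at some limit round `< κ`, or the final intersection is nonempty. -/
def WinningFair {κ : Cardinal.{u}} {X : Type u} [TopologicalSpace X]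
    (σ : Strategy κ X) : Prop :=
  IsIIStrategy σ ∧
  (∀ f a, LegalBelow σ f a → LegalI σ f a → LegalII σ f a) ∧
  (∀ f, (∀ a, LegalI σ f a ∧ LegalII σ f a) →
    (∃ a, IsLimitElt a ∧ InterBelow (σ f) a = ∅) ∨ (⋂ a, σ f a).Nonempty)

/-- `X` is a strong κ-Choquet space. -/
def SCSpace (κ : Cardinal.{u}) (X : Type u) [TopologicalSpace X] : Prop :=
  HasWeightLE κ X ∧ ∃ σ : Strategy κ X, WinningStrong σ

/-- `X` is a strongly fair κ-Choquet space. -/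
def fSCSpace (κ : Cardinal.{u}) (X : Type u) [TopologicalSpace X] : Prop :=
  HasWeightLE κ X ∧ ∃ σ : Strategy κ X, WinningFair σ

/-! ### Trees on κ -/

/-- Sequences of length `< κ` with values in `κ`, encoded as pairs `(a, x)` representing
the restriction of `x : κ → κ` to the initial segment `{b | b < a}`. -/
abbrev TreeSeq (κ : Cardinal.{u}) : Type u := κ.ord.ToType × (κ.ord.ToType → κ.ord.ToType)

/-- `T` is a tree on `κ`: membership of `(a, x)` only depends on the restriction of `x`
below `a` (so that `T` really is a set of `<κ`-sequences), and `T` is closed under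
initial segments. -/
def IsTreeOn (κ : Cardinal.{u}) (T : Set (TreeSeq κ)) : Prop :=
  (∀ a, ∀ x y : κ.ord.ToType → κ.ord.ToType,
      (∀ b, b < a → x b = y b) → ((a, x) ∈ T ↔ (a, y) ∈ T)) ∧
  (∀ a x, (a, x) ∈ T → ∀ b, b ≤ a → (b, x) ∈ T)

/-- The body `[T]` of a tree `T` on `κ`. -/
def TreeBody (κ : Cardinal.{u}) (T : Set (TreeSeq κ)) : Set (GenBaire κ) :=
  {x | ∀ a, (a, x) ∈ T}

/-- `T` is pruned: every element has extensions in `T` of every length `< κ`. -/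
def TreePruned (κ : Cardinal.{u}) (T : Set (TreeSeq κ)) : Prop :=
  ∀ a x, (a, x) ∈ T → ∀ c, a ≤ c → ∃ y, (∀ b, b < a → y b = x b) ∧ (c, y) ∈ T

/-- `T` is `<κ`-closed: a limit-length sequence all of whose proper initial segments
lie in `T` lies in `T`. -/
def TreeLtClosed (κ : Cardinal.{u}) (T : Set (TreeSeq κ)) : Prop :=
  ∀ a, IsLimitElt a → ∀ x, (∀ b, b < a → (b, x) ∈ T) → (a, x) ∈ T

/-- `T` is superclosed: a pruned and `<κ`-closed tree. -/
def IsSuperclosedTree (κ : Cardinal.{u}) (T : Set (TreeSeq κ)) : Prop :=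
  IsTreeOn κ T ∧ TreePruned κ T ∧ TreeLtClosed κ T

/-- A subset of the generalized Baire space is superclosed if it is the body of a
superclosed tree. -/
def IsSuperclosedSet (κ : Cardinal.{u}) (C : Set (GenBaire κ)) : Prop :=
  ∃ T : Set (TreeSeq κ), IsSuperclosedTree κ T ∧ C = TreeBody κ T

/-- The `a`-th level of a tree `T` on `κ`. -/
def TreeLev (κ : Cardinal.{u}) (T : Set (TreeSeq κ)) (a : κ.ord.ToType) :
    Set ({b : κ.ord.ToType // b < a} → κ.ord.ToType) :=
  {s | ∃ x, (a, x) ∈ T ∧ ∀ b : {b : κ.ord.ToType // b < a}, x b.1 = s b}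

/-- κ has the tree property: every tree on κ all of whose levels are nonempty of size `< κ`
has a (cofinal) branch. -/
def TreeProperty (κ : Cardinal.{u}) : Prop :=
  ∀ T : Set (TreeSeq κ), IsTreeOn κ T →
    (∀ a, (TreeLev κ T a).Nonempty ∧ #(TreeLev κ T a) < κ) →
    ∃ x : κ.ord.ToType → κ.ord.ToType, ∀ a, (a, x) ∈ T

/-- κ is (strongly) inaccessible. -/
def Inaccessible (κ : Cardinal.{u}) : Prop :=
  ℵ₀ < κ ∧ κ.IsRegular ∧ ∀ μ : Cardinal.{u}, μ < κ → (2 : Cardinal.{u}) ^ μ < κ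

/-- κ is weakly compact: inaccessible with the tree property. -/
def WeaklyCompact (κ : Cardinal.{u}) : Prop := Inaccessible κ ∧ TreeProperty κ

/-! ### κ-Borel sets -/

/-- The κ-Borel subsets of a topological space: the smallest family containing the open
sets and closed under complements and unions of at most κ-many sets. -/
inductive KBorel (κ : Cardinal.{u}) {X : Type u} [TopologicalSpace X] : Set X → Prop
  | of_isOpen (U : Set X) : IsOpen U → KBorel κ U
  | compl (S : Set X) : KBorel κ S → KBorel κ Sᶜ
  | iUnion (ι : Type u) (f : ι → Set X) : #ι ≤ κ → (∀ i, KBorel κ (f i)) → KBorel κ (⋃ i, f i)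

/-! ### 𝔾-metric spaces -/

section GMetric

variable (G : Type u) [AddCommGroup G] [LinearOrder G] [IsOrderedAddMonoid G]

/-- The positive cone of `G` has coinitiality `κ`: there is a coinitial set of positive
elements of size `≤ κ`, and no such set of size `< κ`. -/
def HasDegree (κ : Cardinal.{u}) : Prop :=
  (∃ S : Set G, (∀ ε ∈ S, 0 < ε) ∧ (∀ δ : G, 0 < δ → ∃ ε ∈ S, ε ≤ δ) ∧ #S ≤ κ) ∧
  (∀ S : Set G, (∀ ε ∈ S, 0 < ε) → (∀ δ : G, 0 < δ → ∃ ε ∈ S, ε ≤ δ) → κ ≤ #S)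

variable {G}

/-- `d` is a `𝔾`-metric on `X`. -/
structure IsGMetric {X : Type u} (d : X → X → G) : Prop where
  nonneg : ∀ x y, 0 ≤ d x y
  eq_zero_iff : ∀ x y, d x y = 0 ↔ x = y
  symm : ∀ x y, d x y = d y x
  triangle : ∀ x y z, d x z ≤ d x y + d y z

/-- The open ball of center `x` and radius `ε`. -/
def GBall {X : Type u} (d : X → X → G) (x : X) (ε : G) : Set X := {y | d x y < ε}

/-- The topology induced by a `𝔾`-metric. -/
def GMetricTopology {X : Type u} (d : X → X → G) : TopologicalSpace X :=
  TopologicalSpace.generateFrom {U | ∃ x ε, 0 < ε ∧ U = GBall d x ε}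

/-- The `𝔾`-metric `d` is compatible with the topology of `X`. -/
def GCompatible {X : Type u} [t : TopologicalSpace X] (d : X → X → G) : Prop :=
  GMetricTopology d = t

/-- A `κ`-sequence is `d`-Cauchy. -/
def GCauchy (κ : Cardinal.{u}) {X : Type u} (d : X → X → G) (x : κ.ord.ToType → X) : Prop :=
  ∀ ε : G, 0 < ε → ∃ a, ∀ b, a ≤ b → ∀ c, a ≤ c → d (x b) (x c) < ε

/-- A `κ`-sequence `d`-converges to `y`. -/
def GConvergesTo (κ : Cardinal.{u}) {X : Type u} (d : X → X → G)
    (x : κ.ord.ToType → X) (y : X) : Prop :=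
  ∀ ε : G, 0 < ε → ∃ a, ∀ b, a ≤ b → d (x b) y < ε

/-- `d` is Cauchy-complete: every `d`-Cauchy `κ`-sequence converges. -/
def GCauchyComplete (κ : Cardinal.{u}) {X : Type u} (d : X → X → G) : Prop :=
  ∀ x : κ.ord.ToType → X, GCauchy κ d x → ∃ y, GConvergesTo κ d x y

/-- `X` is `𝔾`-metrizable: it admits a compatible `𝔾`-metric. -/
def GMetrizable (G : Type u) [AddCommGroup G] [LinearOrder G] [IsOrderedAddMonoid G]
    (X : Type u) [TopologicalSpace X] : Prop :=
  ∃ d : X → X → G, IsGMetric d ∧ GCompatible d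

/-- `X` is `𝔾`-Polish: it has weight `≤ κ` and admits a compatible Cauchy-complete
`𝔾`-metric. -/
def GPolish (G : Type u) [AddCommGroup G] [LinearOrder G] [IsOrderedAddMonoid G] (κ : Cardinal.{u})
    (X : Type u) [TopologicalSpace X] : Prop :=
  HasWeightLE κ X ∧ ∃ d : X → X → G, IsGMetric d ∧ GCompatible d ∧ GCauchyComplete κ d

/-- `d` is spherically complete: every (nonempty) ⊆-decreasing transfinite sequence of open
`d`-balls has nonempty intersection. -/
def SphericallyComplete {X : Type u} (d : X → X → G) : Prop :=
  ∀ o : Ordinal.{u}, o ≠ 0 → ∀ c : o.ToType → Set X,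
    (∀ i, ∃ x ε, 0 < ε ∧ c i = GBall d x ε) →
    (∀ i j, i ≤ j → c j ⊆ c i) → (⋂ i, c i).Nonempty

/-- `d` is spherically `<κ`-complete: every (nonempty) ⊆-decreasing sequence of open
`d`-balls of length `< κ` has nonempty intersection. -/
def SphericallyLtComplete (κ : Cardinal.{u}) {X : Type u} (d : X → X → G) : Prop :=
  ∀ o : Ordinal.{u}, o ≠ 0 → o < κ.ord → ∀ c : o.ToType → Set X,
    (∀ i, ∃ x ε, 0 < ε ∧ c i = GBall d x ε) →
    (∀ i j, i ≤ j → c j ⊆ c i) → (⋂ i, c i).Nonempty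

/-- `X` is a spherically complete `𝔾`-Polish space. -/
def GPolishSphericallyComplete (G : Type u) [AddCommGroup G] [LinearOrder G] [IsOrderedAddMonoid G] (κ : Cardinal.{u})
    (X : Type u) [TopologicalSpace X] : Prop :=
  HasWeightLE κ X ∧
    ∃ d : X → X → G, IsGMetric d ∧ GCompatible d ∧ GCauchyComplete κ d ∧ SphericallyComplete d

/-- `X` is a spherically `<κ`-complete `𝔾`-Polish space. -/
def GPolishSphericallyLtComplete (G : Type u) [AddCommGroup G] [LinearOrder G] [IsOrderedAddMonoid G] (κ : Cardinal.{u})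
    (X : Type u) [TopologicalSpace X] : Prop :=
  HasWeightLE κ X ∧
    ∃ d : X → X → G, IsGMetric d ∧ GCompatible d ∧ GCauchyComplete κ d ∧
      SphericallyLtComplete κ d

end GMetric

/-! ### κ-Borel spaces -/

/-- `ℬ` is a `κ⁺`-algebra on `X`: closed under complements and unions of at most
κ-many sets. -/
def IsKplusAlgebra (κ : Cardinal.{u}) {X : Type u} (ℬ : Set (Set X)) : Prop :=
  (∀ S ∈ ℬ, Sᶜ ∈ ℬ) ∧
  (∀ (ι : Type u) (f : ι → Set X), #ι ≤ κ → (∀ i, f i ∈ ℬ) → (⋃ i, f i) ∈ ℬ)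

/-- `ℬ` separates the points of `X`. -/
def SepPoints {X : Type u} (ℬ : Set (Set X)) : Prop :=
  ∀ x y : X, x ≠ y → ∃ S ∈ ℬ, x ∈ S ∧ y ∉ S

/-- `(X, ℬ)` is a κ-Borel space: a `κ⁺`-algebra that separates points and is generated
(as a `κ⁺`-algebra) by a subfamily of size `≤ κ`. -/
def IsKBorelSpace (κ : Cardinal.{u}) {X : Type u} (ℬ : Set (Set X)) : Prop :=
  IsKplusAlgebra κ ℬ ∧ SepPoints ℬ ∧
    ∃ 𝒢 ⊆ ℬ, #𝒢 ≤ κ ∧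
      ∀ ℬ' : Set (Set X), IsKplusAlgebra κ ℬ' → 𝒢 ⊆ ℬ' → ℬ ⊆ ℬ'

/-- The restriction `ℬ↾A` of a family of subsets of `X` to `A ⊆ X`. -/
def RestrictFam {X : Type u} (ℬ : Set (Set X)) (A : Set X) : Set (Set ↥A) :=
  {T | ∃ S ∈ ℬ, T = Subtype.val ⁻¹' S}

/-- The family of κ-Borel sets of a topological space. -/
def KBorelFam (κ : Cardinal.{u}) (X : Type u) [TopologicalSpace X] : Set (Set X) :=
  {S | KBorel κ S}

/-- `e` is a κ-Borel isomorphism between `(X, ℬ)` and `(Y, 𝒞)`: a bijection under which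
images and preimages of distinguished sets are distinguished. -/
def IsKBorelSpaceIso {X Y : Type u} (ℬ : Set (Set X)) (𝒞 : Set (Set Y)) (e : X ≃ Y) : Prop :=
  (∀ S ∈ ℬ, e '' S ∈ 𝒞) ∧ (∀ S ∈ 𝒞, e ⁻¹' S ∈ ℬ)

/-- `(X, ℬ)` is a standard κ-Borel space: it is a κ-Borel space which is κ-Borel isomorphic
to a κ-Borel subset of the generalized Baire space (with the restricted κ-Borel structure). -/
def IsStandardKBorel (κ : Cardinal.{u}) {X : Type u} (ℬ : Set (Set X)) : Prop :=
  IsKBorelSpace κ ℬ ∧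
    ∃ B₀ : Set (GenBaire κ), KBorel κ B₀ ∧
      ∃ e : X ≃ ↥B₀, IsKBorelSpaceIso ℬ (RestrictFam (KBorelFam κ (GenBaire κ)) B₀) e

/-!
The points of `closure A` at which `f` has oscillation zero form a `G_δ^κ` set `B`: with
`(δᵢ)_{i<κ}` a κ-sequence of positive elements tending to `0`, `B` is the intersection of the
open sets "within `δᵢ` of `A`" and "oscillation of `f` below `δᵢ`". Every `x ∈ B` is the limit
of a κ-sequence `(aᵢ)` in `A`; zero oscillation at `x` makes `(f aᵢ)` Cauchy, and `g x` is its
limit. The same oscillation bound shows that `g` is continuous, and continuity of `f` gives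
`g = f` on `A`.
-/

open Filter Topology

section Degree

variable {G : Type u} [AddCommGroup G] [LinearOrder G] {κ : Cardinal.{u}}

theorem HasDegree.exists_pos_lt_of_mk_lt (hG : HasDegree G κ) {S : Set G}
    (hS : ∀ s ∈ S, 0 < s) (hSκ : #S < κ) : ∃ δ : G, 0 < δ ∧ ∀ s ∈ S, δ < s := by
  by_contra! h
  exact (hG.2 S hS h).not_gt hSκ

theorem HasDegree.exists_pos (hG : HasDegree G κ) (hκ : κ ≠ 0) : ∃ ε : G, 0 < ε := by
  obtain ⟨δ, hδ, -⟩ := hG.exists_pos_lt_of_mk_lt (S := ∅) (by simp) (by simpa [pos_iff_ne_zero])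
  exact ⟨δ, hδ⟩

theorem HasDegree.denselyOrdered [IsOrderedAddMonoid G] (hG : HasDegree G κ) (hκ : 1 < κ) :
    DenselyOrdered G := by
  refine ⟨fun a b hab => ?_⟩
  obtain ⟨δ, hδ, hδb⟩ := hG.exists_pos_lt_of_mk_lt (S := {b - a}) (by simpa using hab) (by simpa)
  exact ⟨a + δ, lt_add_of_pos_right a hδ, lt_sub_iff_add_lt'.1 (hδb _ rfl)⟩

theorem HasDegree.exists_seq_pos_tendsto_zero (hG : HasDegree G κ) (hκ : ℵ₀ ≤ κ) :
    ∃ δ : κ.ord.ToType → G, (∀ i, 0 < δ i) ∧ ∀ η : G, 0 < η → ∀ᶠ i in atTop, δ i < η := by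
  obtain ⟨S, hSpos, hScoinit, hSκ⟩ := hG.1
  obtain ⟨e⟩ : Nonempty (κ.ord.ToType ≃ S) :=
    Cardinal.eq.1 (by simpa using (le_antisymm hSκ (hG.2 S hSpos hScoinit)).symm)
  have hIic (i : κ.ord.ToType) : #(Iic i) < κ := by
    simpa using Cardinal.mk_Iic_lt i (by simp) (by simpa using hκ)
  have hbelow (i : κ.ord.ToType) : ∃ δ : G, 0 < δ ∧ ∀ j ≤ i, δ < e j := by
    obtain ⟨δ, hδ, hδS⟩ := hG.exists_pos_lt_of_mk_lt (S := (fun j => (e j : G)) '' Iic i)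
      (by rintro _ ⟨j, -, rfl⟩; exact hSpos _ (e j).2) (mk_image_le.trans_lt (hIic i))
    exact ⟨δ, hδ, fun j hj => hδS _ ⟨j, hj, rfl⟩⟩
  choose δ hδpos hδ using hbelow
  refine ⟨δ, hδpos, fun η hη => ?_⟩
  obtain ⟨s, hs, hsη⟩ := hScoinit η hη
  filter_upwards [Ici_mem_atTop (e.symm ⟨s, hs⟩)] with i hi
  simpa using (hδ i _ hi).trans_le (by simpa using hsη)

end Degree

section GMetric

variable {G : Type u} [AddCommGroup G] [LinearOrder G] {Z : Type u} {ρ : Z → Z → G}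

theorem mem_gBall_self (hρ : IsGMetric ρ) (z : Z) {ε : G} (hε : 0 < ε) : z ∈ GBall ρ z ε := by
  simpa [GBall, (hρ.eq_zero_iff z z).2 rfl] using hε

theorem isOpen_gBall [TopologicalSpace Z] (hρc : GCompatible ρ) (z : Z) {ε : G} (hε : 0 < ε) :
    IsOpen (GBall ρ z ε) := by
  rw [← hρc]
  exact TopologicalSpace.isOpen_generateFrom_of_mem ⟨z, ε, hε, rfl⟩

theorem exists_gBall_subset_of_isOpen [IsOrderedAddMonoid G] [TopologicalSpace Z] (hρ : IsGMetric ρ)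
    (hρc : GCompatible ρ) (hpos : ∃ ε : G, 0 < ε) {V : Set Z} (hV : IsOpen V) :
    ∀ z ∈ V, ∃ η : G, 0 < η ∧ GBall ρ z η ⊆ V := by
  rw [← hρc] at hV
  induction hV with
  | basic U hU =>
    obtain ⟨x, ε, -, rfl⟩ := hU
    intro z (hz : ρ x z < ε)
    refine ⟨ε - ρ x z, sub_pos.2 hz, fun y (hy : ρ z y < ε - ρ x z) => ?_⟩
    exact (hρ.triangle x z y).trans_lt (lt_sub_iff_add_lt'.1 hy)
  | univ =>
    obtain ⟨ε, hε⟩ := hpos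
    exact fun _ _ => ⟨ε, hε, subset_univ _⟩
  | inter U₁ U₂ _ _ ih₁ ih₂ =>
    rintro z ⟨hz₁, hz₂⟩
    obtain ⟨η₁, hη₁, hsub₁⟩ := ih₁ z hz₁
    obtain ⟨η₂, hη₂, hsub₂⟩ := ih₂ z hz₂
    refine ⟨min η₁ η₂, lt_min hη₁ hη₂, subset_inter ?_ ?_⟩
    · exact fun y hy => hsub₁ (lt_of_lt_of_le hy (min_le_left _ _))
    · exact fun y hy => hsub₂ (lt_of_lt_of_le hy (min_le_right _ _))
  | sUnion S _ ih =>
    rintro z ⟨U, hU, hzU⟩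
    obtain ⟨η, hη, hsub⟩ := ih U hU z hzU
    exact ⟨η, hη, hsub.trans (subset_sUnion_of_mem hU)⟩

theorem nhds_hasBasis_gBall [IsOrderedAddMonoid G] [TopologicalSpace Z] (hρ : IsGMetric ρ)
    (hρc : GCompatible ρ) (hpos : ∃ ε : G, 0 < ε) (z : Z) :
    (𝓝 z).HasBasis (fun η : G => 0 < η) (GBall ρ z) := by
  refine ⟨fun t => ⟨fun ht => ?_, fun ⟨η, hη, hsub⟩ => ?_⟩⟩
  · obtain ⟨V, hVt, hV, hzV⟩ := mem_nhds_iff.1 ht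
    obtain ⟨η, hη, hsub⟩ := exists_gBall_subset_of_isOpen hρ hρc hpos hV z hzV
    exact ⟨η, hη, hsub.trans hVt⟩
  · exact Filter.mem_of_superset ((isOpen_gBall hρc z hη).mem_nhds (mem_gBall_self hρ z hη)) hsub

theorem continuous_of_forall_eventually_lt [IsOrderedAddMonoid G] {W : Type*} [TopologicalSpace W]
    [TopologicalSpace Z] (hρ : IsGMetric ρ) (hρc : GCompatible ρ) (hpos : ∃ ε : G, 0 < ε)
    {g : W → Z} (h : ∀ w, ∀ η : G, 0 < η → ∀ᶠ w' in 𝓝 w, ρ (g w) (g w') < η) : Continuous g :=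
  continuous_iff_continuousAt.2 fun w =>
    (nhds_hasBasis_gBall hρ hρc hpos (g w)).tendsto_right_iff.2 (h w)

theorem closure_eq_iInter_iUnion_gBall [IsOrderedAddMonoid G] [TopologicalSpace Z]
    (hρ : IsGMetric ρ) (hρc : GCompatible ρ) (hpos : ∃ ε : G, 0 < ε) {ι : Type*} {δ : ι → G}
    (hδ : ∀ i, 0 < δ i) (hδ0 : ∀ η : G, 0 < η → ∃ i, δ i < η) (A : Set Z) :
    closure A = ⋂ i, ⋃ a ∈ A, GBall ρ a (δ i) := by
  ext z
  simp only [mem_closure_iff_nhds_basis (nhds_hasBasis_gBall hρ hρc hpos z), mem_iInter,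
    mem_iUnion, GBall, hρ.symm z, exists_prop]
  refine ⟨fun h i => h (δ i) (hδ i), fun h η hη => ?_⟩
  obtain ⟨i, hi⟩ := hδ0 η hη
  obtain ⟨a, ha, haz⟩ := h i
  exact ⟨a, ha, haz.trans hi⟩

theorem exists_tendsto_of_mem_closure [IsOrderedAddMonoid G] [TopologicalSpace Z] (hρ : IsGMetric ρ)
    (hρc : GCompatible ρ) (hpos : ∃ ε : G, 0 < ε) {ι : Type*} {l : Filter ι} {δ : ι → G}
    (hδ : ∀ i, 0 < δ i) (hδ0 : ∀ η : G, 0 < η → ∀ᶠ i in l, δ i < η) {A : Set Z} {z : Z}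
    (hz : z ∈ closure A) : ∃ a : ι → A, Tendsto (fun i => (a i : Z)) l (𝓝 z) := by
  have hbasis := nhds_hasBasis_gBall hρ hρc hpos z
  choose a ha hza using fun i => (mem_closure_iff_nhds_basis hbasis).1 hz (δ i) (hδ i)
  refine ⟨fun i => ⟨a i, ha i⟩, hbasis.tendsto_right_iff.2 fun η hη => ?_⟩
  filter_upwards [hδ0 η hη] with i hi
  exact lt_trans (hza i) hi

end GMetric

section Convergence

variable {G : Type u} [AddCommGroup G] [LinearOrder G]
  {κ : Cardinal.{u}} {Z : Type u} {ρ : Z → Z → G} {s t : κ.ord.ToType → Z} {y y' : Z}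

theorem GConvergesTo.eventually_lt (h : GConvergesTo κ ρ s y) {ε : G} (hε : 0 < ε) :
    ∀ᶠ i in atTop, ρ (s i) y < ε :=
  let ⟨j, hj⟩ := h ε hε
  Filter.mem_of_superset (Ici_mem_atTop j) hj

theorem gConvergesTo_of_tendsto [IsOrderedAddMonoid G] [TopologicalSpace Z] [Nonempty κ.ord.ToType]
    (hρ : IsGMetric ρ) (hρc : GCompatible ρ) (hpos : ∃ ε : G, 0 < ε) (h : Tendsto s atTop (𝓝 y)) :
    GConvergesTo κ ρ s y := fun ε hε => by
  obtain ⟨j, hj⟩ :=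
    eventually_atTop.1 ((nhds_hasBasis_gBall hρ hρc hpos y).tendsto_right_iff.1 h ε hε)
  exact ⟨j, fun i hi => (hρ.symm _ _).trans_lt (hj i hi)⟩

theorem GConvergesTo.le_of_eventually_le [IsOrderedAddMonoid G] [DenselyOrdered G]
    [Nonempty κ.ord.ToType] (hρ : IsGMetric ρ) (hs : GConvergesTo κ ρ s y)
    (ht : GConvergesTo κ ρ t y') {η : G} (hst : ∀ᶠ i in atTop, ρ (s i) (t i) ≤ η) : ρ y y' ≤ η := by
  refine le_iff_forall_pos_lt_add.2 fun ε hε => ?_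
  obtain ⟨ε', hε', hε'ε⟩ := exists_nsmul_lt_of_pos hε 2
  obtain ⟨i, hsi, hti, hsti⟩ := ((hs.eventually_lt hε').and ((ht.eventually_lt hε').and hst)).exists
  rw [two_nsmul] at hε'ε
  calc ρ y y' ≤ ρ y (s i) + (ρ (s i) (t i) + ρ (t i) y') :=
        (hρ.triangle _ _ _).trans (add_le_add_right (hρ.triangle _ _ _) _)
    _ < ε' + (η + ε') := add_lt_add ((hρ.symm _ _).trans_lt hsi) (add_lt_add_of_le_of_lt hsti hti)
    _ = η + (ε' + ε') := by abel
    _ < η + ε := by gcongr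

theorem GConvergesTo.unique [IsOrderedAddMonoid G] [DenselyOrdered G] [Nonempty κ.ord.ToType]
    (hρ : IsGMetric ρ) (h : GConvergesTo κ ρ s y) (h' : GConvergesTo κ ρ s y') : y = y' :=
  (hρ.eq_zero_iff y y').1 <| le_antisymm
    (h.le_of_eventually_le hρ h' (Eventually.of_forall fun _ => ((hρ.eq_zero_iff _ _).2 rfl).le))
    (hρ.nonneg y y')

end Convergence

section Oscillation

variable {G : Type u} [LinearOrder G]
  {X Y : Type u} [TopologicalSpace X] {d : Y → Y → G} {A : Set X} {f : A → Y}

def oscLtSet (d : Y → Y → G) (f : A → Y) (η : G) : Set X :=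
  ⋃₀ {U | IsOpen U ∧ ∀ p q : A, (p : X) ∈ U → (q : X) ∈ U → d (f p) (f q) < η}

theorem isOpen_oscLtSet (η : G) : IsOpen (oscLtSet d f η) :=
  isOpen_sUnion fun _ hU => hU.1

theorem oscLtSet_mono {η η' : G} (h : η ≤ η') : oscLtSet d f η ⊆ oscLtSet d f η' :=
  sUnion_mono fun _ hU => ⟨hU.1, fun p q hp hq => (hU.2 p q hp hq).trans_le h⟩

theorem subset_oscLtSet [AddCommGroup G] [IsOrderedAddMonoid G] [DenselyOrdered G]
    [TopologicalSpace Y] (hd : IsGMetric d) (hdc : GCompatible d) (hpos : ∃ ε : G, 0 < ε)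
    (hf : Continuous f) {η : G} (hη : 0 < η) :
    A ⊆ oscLtSet d f η := by
  intro x hx
  obtain ⟨ε, hε, hεη⟩ := exists_nsmul_lt_of_pos hη 2
  rw [two_nsmul] at hεη
  have hfx := (nhds_hasBasis_gBall hd hdc hpos (f ⟨x, hx⟩)).tendsto_right_iff.1
    (hf.tendsto ⟨x, hx⟩) ε hε
  obtain ⟨V, hV, hsub⟩ := (mem_nhds_subtype _ _ _).1 hfx
  obtain ⟨U, hUV, hU, hxU⟩ := mem_nhds_iff.1 hV
  refine ⟨U, ⟨hU, fun p q hp hq => ?_⟩, hxU⟩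
  have hp' : d (f ⟨x, hx⟩) (f p) < ε := hsub (hUV hp)
  have hq' : d (f ⟨x, hx⟩) (f q) < ε := hsub (hUV hq)
  calc d (f p) (f q) ≤ d (f p) (f ⟨x, hx⟩) + d (f ⟨x, hx⟩) (f q) := hd.triangle _ _ _
    _ < ε + ε := add_lt_add ((hd.symm _ _).trans_lt hp') hq'
    _ < η := hεη

theorem gCauchy_of_forall_mem_oscLtSet [AddCommGroup G] {κ : Cardinal.{u}} [Nonempty κ.ord.ToType]
    {x : X} (hx : ∀ η : G, 0 < η → x ∈ oscLtSet d f η) {a : κ.ord.ToType → A}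
    (ha : Tendsto (fun i => (a i : X)) atTop (𝓝 x)) : GCauchy κ d (fun i => f (a i)) := by
  intro η hη
  obtain ⟨U, ⟨hU, hosc⟩, hxU⟩ := hx η hη
  obtain ⟨j, hj⟩ := eventually_atTop.1 (ha (hU.mem_nhds hxU))
  exact ⟨j, fun b hb c hc => hosc _ _ (hj b hb) (hj c hc)⟩

theorem exists_continuous_extension_of_forall_mem_oscLtSet [AddCommGroup G]
    [IsOrderedAddMonoid G] [DenselyOrdered G] [TopologicalSpace Y] {κ : Cardinal.{u}}
    [Nonempty κ.ord.ToType] (hd : IsGMetric d) (hdc : GCompatible d)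
    (hdcc : GCauchyComplete κ d) (hpos : ∃ ε : G, 0 < ε) (hf : Continuous f) {B : Set X}
    (hAB : A ⊆ B)
    (hlim : ∀ x ∈ B, ∃ a : κ.ord.ToType → A, Tendsto (fun i => (a i : X)) atTop (𝓝 x))
    (hosc : ∀ x ∈ B, ∀ η : G, 0 < η → x ∈ oscLtSet d f η) :
    ∃ g : B → Y, Continuous g ∧ ∀ (x : X) (hx : x ∈ A), g ⟨x, hAB hx⟩ = f ⟨x, hx⟩ := by
  choose a ha using fun x : B => hlim x x.2
  choose g hg using fun x : B =>
    hdcc _ (gCauchy_of_forall_mem_oscLtSet (hosc x x.2) (ha x))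
  refine ⟨g, continuous_of_forall_eventually_lt hd hdc hpos fun x η hη => ?_, fun x hx => ?_⟩
  · obtain ⟨ε, hε, hεη⟩ := exists_between hη
    obtain ⟨U, ⟨hU, hUosc⟩, hxU⟩ := hosc x x.2 ε hε
    filter_upwards [(hU.preimage continuous_subtype_val).mem_nhds hxU] with x' hx'
    refine ((hg x).le_of_eventually_le hd (hg x') ?_).trans_lt hεη
    filter_upwards [ha x (hU.mem_nhds hxU), ha x' (hU.mem_nhds hx')] with i hi hi'
    exact (hUosc _ _ hi hi').le
  · exact (hg _).unique hd <| gConvergesTo_of_tendsto hd hdc hpos <|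
      (hf.tendsto ⟨x, hx⟩).comp (tendsto_subtype_rng.2 (ha _))

end Oscillation

theorem stmt_7_general (κ : Cardinal.{u}) (hunc : ℵ₀ < κ)
    (G : Type u) [AddCommGroup G] [LinearOrder G] [IsOrderedAddMonoid G] (hG : HasDegree G κ)
    (X : Type u) [TopologicalSpace X] (hX : GMetrizable G X)
    (Y : Type u) [TopologicalSpace Y] (d : Y → Y → G) (hd : IsGMetric d)
    (hdc : GCompatible d) (hdcc : GCauchyComplete κ d)
    (A : Set X) (f : ↥A → Y) (hf : Continuous f) :
    ∃ B : Set X, IsGDeltaKappa κ B ∧ ∃ hAB : A ⊆ B, B ⊆ closure A ∧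
      ∃ g : ↥B → Y, Continuous g ∧ ∀ (x : X) (hx : x ∈ A), g ⟨x, hAB hx⟩ = f ⟨x, hx⟩ := by
  obtain ⟨ρ, hρ, hρc⟩ := hX
  have hκ : κ ≠ 0 := (aleph0_pos.trans hunc).ne'
  have hpos := hG.exists_pos hκ
  have := hG.denselyOrdered (one_lt_aleph0.trans hunc)
  have := nonempty_ord_toType hκ
  obtain ⟨δ, hδpos, hδ0⟩ := hG.exists_seq_pos_tendsto_zero hunc.le
  have hδlt (η : G) (hη : 0 < η) : ∃ i, δ i < η := (hδ0 η hη).exists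
  set B := ⋂ i, (⋃ a ∈ A, GBall ρ a (δ i)) ∩ oscLtSet d f (δ i)
  have hAB : A ⊆ B := fun x hx => mem_iInter.2 fun i =>
    ⟨mem_biUnion hx (mem_gBall_self hρ x (hδpos i)), subset_oscLtSet hd hdc hpos hf (hδpos i) hx⟩
  have hBA : B ⊆ closure A := closure_eq_iInter_iUnion_gBall hρ hρc hpos hδpos hδlt A ▸
    iInter_mono fun _ => inter_subset_left
  have hosc (x : X) (hx : x ∈ B) (η : G) (hη : 0 < η) : x ∈ oscLtSet d f η :=
    let ⟨i, hi⟩ := hδlt η hη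
    oscLtSet_mono hi.le (mem_iInter.1 hx i).2
  obtain ⟨g, hg, hgf⟩ := exists_continuous_extension_of_forall_mem_oscLtSet hd hdc hdcc hpos hf
    hAB (fun x hx => exists_tendsto_of_mem_closure hρ hρc hpos hδpos hδ0 (hBA hx)) hosc
  refine ⟨B, ⟨_, fun i => ?_, rfl⟩, hAB, hBA, g, hg, hgf⟩
  exact (isOpen_biUnion fun a _ => isOpen_gBall hρc a (hδpos i)).inter (isOpen_oscLtSet _)

/-- extension of continuous maps into Cauchy-complete 𝔾-metric spaces from an
arbitrary subset to a G_δ^κ subset between it and its closure. -/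
theorem stmt_7 (κ : Cardinal.{u}) (hreg : κ.IsRegular) (hunc : ℵ₀ < κ)
    (hpow : (2 : Cardinal.{u}) ^< κ = κ)
    (G : Type u) [AddCommGroup G] [LinearOrder G] [IsOrderedAddMonoid G] (hG : HasDegree G κ)
    (X : Type u) [TopologicalSpace X] (hX : GMetrizable G X)
    (Y : Type u) [TopologicalSpace Y] (d : Y → Y → G) (hd : IsGMetric d)
    (hdc : GCompatible d) (hdcc : GCauchyComplete κ d)
    (A : Set X) (f : ↥A → Y) (hf : Continuous f) :
    ∃ B : Set X, IsGDeltaKappa κ B ∧ ∃ hAB : A ⊆ B, B ⊆ closure A ∧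
      ∃ g : ↥B → Y, Continuous g ∧ ∀ (x : X) (hx : x ∈ A), g ⟨x, hAB hx⟩ = f ⟨x, hx⟩ :=
  stmt_7_general κ hunc G hG X hX Y d hd hdc hdcc A f hf

end GDST
end

section
/- Let 𝔾 be a linearly ordered abelian group of degree κ, let X be a 𝔾-Polish space and let Y ⊆ X. Then Y with the subspace topology is 𝔾-Polish if and only if Y is a G_δ^κ subset of X. -/
/-!
If `Y` carries a complete compatible `𝔾`-metric `dY` and `ε` is a coinitial `κ`-sequence in `𝔾⁺`,
then `Y` consists exactly of the points of `closure Y` that have, for every `a`, a neighbourhood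
whose trace on `Y` has `dY`-diameter `< ε a`: such a point is the limit of a `dY`-Cauchy sequence
from `Y`. This description is `G_δ^κ`.

Conversely, as the degree `κ` is uncountable, below every positive element there is one all of
whose multiples stay below it; this makes every open set a union of `κ` clopen sets. For
`Y = ⋂ i, U i`, write `U i = ⋃ j, C i j` with `C i j` clopen, rank `y ∈ Y` by the least `j` with
`y ∈ C i j`, and take the maximum of the metric of `X` and the Baire-space ultrametric of the
ranks: this is a complete compatible metric on `Y`.
-/

universe u v

open Cardinal Set

namespace GDST

open Filter Topology

theorem mk_Iic_lt {κ : Cardinal.{u}} (hκ : ℵ₀ ≤ κ) (a : κ.ord.ToType) : #(Iic a) < κ := by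
  have := Cardinal.noMaxOrder hκ
  obtain ⟨b, hab⟩ := exists_gt a
  exact (mk_le_mk_of_subset (Iic_subset_Iio.2 hab)).trans_lt (by simpa using mk_Iio_lt b)

namespace HasDegree

variable {κ : Cardinal.{u}} {G : Type u} [AddCommGroup G] [LinearOrder G]

theorem exists_pos_lt_of_mk_lt_s8 (hG : HasDegree G κ) {S : Set G} (hS : ∀ x ∈ S, 0 < x)
    (hcard : #S < κ) : ∃ δ : G, 0 < δ ∧ ∀ x ∈ S, δ < x := by
  by_contra! h
  exact (hG.2 S hS h).not_gt hcard

theorem exists_pos_s8 (hG : HasDegree G κ) (hκ : κ ≠ 0) : ∃ δ : G, 0 < δ := by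
  obtain ⟨δ, hδ, -⟩ := hG.exists_pos_lt_of_mk_lt_s8 (S := ∅) (by simp) (by simpa [pos_iff_ne_zero])
  exact ⟨δ, hδ⟩

theorem nontrivial (hG : HasDegree G κ) (hκ : κ ≠ 0) : Nontrivial G :=
  let ⟨δ, hδ⟩ := hG.exists_pos_s8 hκ
  ⟨⟨δ, 0, hδ.ne'⟩⟩

theorem exists_pos_lt (hG : HasDegree G κ) (hκ : 1 < κ) {δ : G} (hδ : 0 < δ) :
    ∃ η : G, 0 < η ∧ η < δ := by
  obtain ⟨η, hη, hηδ⟩ := hG.exists_pos_lt_of_mk_lt_s8 (S := {δ}) (by simpa) (by simpa)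
  exact ⟨η, hη, hηδ δ rfl⟩

theorem exists_coinitial_seq (hG : HasDegree G κ) (hκ : κ ≠ 0) :
    ∃ s : κ.ord.ToType → G, (∀ a, 0 < s a) ∧ ∀ δ : G, 0 < δ → ∃ a, s a ≤ δ := by
  obtain ⟨S, hS, hSco, hScard⟩ := hG.1
  obtain ⟨δ, hδ⟩ := hG.exists_pos_s8 hκ
  have : Nonempty S := (hSco δ hδ).elim fun ε hε => ⟨⟨ε, hε.1⟩⟩
  obtain ⟨e⟩ : Nonempty (S ↪ κ.ord.ToType) := by rw [← Cardinal.le_def]; simpa using hScard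
  let s : κ.ord.ToType → S := Function.invFun e
  refine ⟨fun a => s a, fun a => hS _ (s a).2, fun δ hδ => ?_⟩
  obtain ⟨ε, hεS, hεδ⟩ := hSco δ hδ
  obtain ⟨a, ha⟩ := Function.invFun_surjective e.injective ⟨ε, hεS⟩
  exact ⟨a, by simpa [s, ha] using hεδ⟩

theorem exists_strictAnti_coinitial (hG : HasDegree G κ) (hκ : ℵ₀ ≤ κ) :
    ∃ ε : κ.ord.ToType → G, (∀ a, 0 < ε a) ∧ StrictAnti ε ∧ ∀ δ : G, 0 < δ → ∃ a, ε a < δ := by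
  obtain ⟨s, hs, hsco⟩ := hG.exists_coinitial_seq (aleph0_pos.trans_le hκ).ne'
  have step : ∀ a (prev : Iio a → {g : G // 0 < g}),
      ∃ e : {g : G // 0 < g}, e.1 < s a ∧ ∀ b, e.1 < (prev b).1 := by
    intro a prev
    have hcard : #(insert (s a) (range fun b => (prev b).1) : Set G) < κ :=
      mk_insert_le.trans_lt <| add_lt_of_lt hκ
        (mk_range_le.trans_lt (by simpa using mk_Iio_lt a)) (one_lt_aleph0.trans_le hκ)
    obtain ⟨δ, hδ, hlt⟩ := hG.exists_pos_lt_of_mk_lt_s8 (by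
      rintro _ (rfl | ⟨b, rfl⟩)
      exacts [hs a, (prev b).2]) hcard
    exact ⟨⟨δ, hδ⟩, hlt _ (mem_insert _ _), fun b => hlt _ (mem_insert_of_mem _ ⟨b, rfl⟩)⟩
  choose next hnext_s hnext_prev using step
  let ε : κ.ord.ToType → {g : G // 0 < g} :=
    wellFounded_lt.fix fun a rec => next a fun b => rec b b.2
  have hε : ∀ a, ε a = next a fun b => ε b := wellFounded_lt.fix_eq _
  refine ⟨fun a => (ε a).1, fun a => (ε a).2, fun b a hba => ?_, fun δ hδ => ?_⟩
  · show (ε a).1 < (ε b).1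
    rw [hε a]
    exact hnext_prev a _ ⟨b, hba⟩
  · obtain ⟨a, ha⟩ := hsco δ hδ
    refine ⟨a, lt_of_lt_of_le ?_ ha⟩
    show (ε a).1 < s a
    rw [hε a]
    exact hnext_s a _

variable [IsOrderedAddMonoid G]

theorem exists_pos_add_self_le (hG : HasDegree G κ) (hκ : 1 < κ) {δ : G} (hδ : 0 < δ) :
    ∃ η : G, 0 < η ∧ η + η ≤ δ := by
  obtain ⟨c, hc, hcδ⟩ := hG.exists_pos_lt hκ hδ
  refine ⟨min c (δ - c), lt_min hc (sub_pos.2 hcδ), ?_⟩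
  calc min c (δ - c) + min c (δ - c) ≤ c + (δ - c) :=
        add_le_add (min_le_left _ _) (min_le_right _ _)
    _ = δ := add_sub_cancel c δ

/-- Halve `ω` times and take a positive lower bound of the countably many halves. -/
theorem exists_pos_forall_nsmul_le (hG : HasDegree G κ) (hκ : ℵ₀ < κ) {c : G} (hc : 0 < c) :
    ∃ β : G, 0 < β ∧ ∀ n : ℕ, n • β ≤ c := by
  have h1 : 1 < κ := one_lt_aleph0.trans hκ
  choose half hhalf_pos hhalf using fun η : {η : G // 0 < η} => hG.exists_pos_add_self_le h1 η.2
  let η : ℕ → {η : G // 0 < η} := fun n => Nat.rec ⟨c, hc⟩ (fun _ e => ⟨half e, hhalf_pos e⟩) n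
  have hη : ∀ n, 2 ^ n • (η n).1 ≤ c := by
    intro n
    induction n with
    | zero => simp [η]
    | succ n ih =>
      calc 2 ^ (n + 1) • (η (n + 1)).1 = 2 ^ n • (half (η n) + half (η n)) := by
            rw [pow_succ, mul_nsmul, two_nsmul, nsmul_add]
        _ ≤ 2 ^ n • (η n).1 := nsmul_le_nsmul_right (hhalf _) _
        _ ≤ c := ih
  obtain ⟨β, hβ, hβη⟩ := hG.exists_pos_lt_of_mk_lt_s8 (S := range fun n => (η n).1)
    (by rintro _ ⟨n, rfl⟩; exact (η n).2) ((countable_range _).le_aleph0.trans_lt hκ)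
  refine ⟨β, hβ, fun n => ?_⟩
  calc n • β ≤ 2 ^ n • β := nsmul_le_nsmul_left hβ.le (Nat.lt_two_pow_self).le
    _ ≤ 2 ^ n • (η n).1 := nsmul_le_nsmul_right (hβη _ ⟨n, rfl⟩).le _
    _ ≤ c := hη n

end HasDegree

section GMetricSpace

variable {κ : Cardinal.{u}} {G : Type u} [LinearOrder G] {X : Type u} {d : X → X → G}

theorem gBall_subset_gBall {x : X} {ε ε' : G} (h : ε ≤ ε') : GBall d x ε ⊆ GBall d x ε' :=
  fun _ hy => lt_of_lt_of_le hy h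

variable [AddCommGroup G]

theorem IsGMetric.mem_gBall_self (hd : IsGMetric d) {x : X} {ε : G} (hε : 0 < ε) :
    x ∈ GBall d x ε := by
  simpa [GBall, (hd.eq_zero_iff x x).2 rfl] using hε

theorem IsGMetric.comp (hd : IsGMetric d) {Y : Type u} {f : Y → X} (hf : Function.Injective f) :
    IsGMetric fun a b => d (f a) (f b) where
  nonneg _ _ := hd.nonneg _ _
  eq_zero_iff _ _ := (hd.eq_zero_iff _ _).trans hf.eq_iff
  symm _ _ := hd.symm _ _
  triangle _ _ _ := hd.triangle _ _ _

variable [IsOrderedAddMonoid G]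

theorem IsGMetric.gBall_subset_gBall_sub (hd : IsGMetric d) (x y : X) (ε : G) :
    GBall d y (ε - d x y) ⊆ GBall d x ε := fun z hz =>
  calc d x z ≤ d x y + d y z := hd.triangle x y z
    _ < d x y + (ε - d x y) := add_lt_add_right hz _
    _ = ε := add_sub_cancel _ _

variable [Nontrivial G]

theorem IsGMetric.isTopologicalBasis (hd : IsGMetric d) :
    @TopologicalSpace.IsTopologicalBasis X (GMetricTopology d)
      {U | ∃ x ε, 0 < ε ∧ U = GBall d x ε} := by
  let _ := GMetricTopology d
  refine ⟨?_, ?_, rfl⟩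
  · rintro _ ⟨x₁, ε₁, -, rfl⟩ _ ⟨x₂, ε₂, -, rfl⟩ y ⟨hy₁, hy₂⟩
    have hr : 0 < min (ε₁ - d x₁ y) (ε₂ - d x₂ y) := lt_min (sub_pos.2 hy₁) (sub_pos.2 hy₂)
    refine ⟨_, ⟨y, _, hr, rfl⟩, hd.mem_gBall_self hr, subset_inter ?_ ?_⟩
    · exact (gBall_subset_gBall (min_le_left _ _)).trans (hd.gBall_subset_gBall_sub _ _ _)
    · exact (gBall_subset_gBall (min_le_right _ _)).trans (hd.gBall_subset_gBall_sub _ _ _)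
  · obtain ⟨ε, hε⟩ := exists_zero_lt (α := G)
    exact sUnion_eq_univ_iff.2 fun x => ⟨_, ⟨x, ε, hε, rfl⟩, hd.mem_gBall_self hε⟩

theorem IsGMetric.nhds_hasBasis_gBall (hd : IsGMetric d) (x : X) :
    (@nhds X (GMetricTopology d) x).HasBasis (fun ε : G => 0 < ε) (GBall d x) := by
  let _ := GMetricTopology d
  refine ⟨fun t => hd.isTopologicalBasis.mem_nhds_iff.trans ⟨?_, ?_⟩⟩
  · rintro ⟨_, ⟨y, ε, -, rfl⟩, hx, hsub⟩
    exact ⟨ε - d y x, sub_pos.2 hx, (hd.gBall_subset_gBall_sub _ _ _).trans hsub⟩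
  · rintro ⟨ε, hε, hsub⟩
    exact ⟨_, ⟨x, ε, hε, rfl⟩, hd.mem_gBall_self hε, hsub⟩

variable [TopologicalSpace X]

theorem GCompatible.nhds_hasBasis (hc : GCompatible d) (hd : IsGMetric d) (x : X) :
    (𝓝 x).HasBasis (fun ε : G => 0 < ε) (GBall d x) := by
  rw [← hc]
  exact hd.nhds_hasBasis_gBall x

theorem gCompatible_iff (hd : IsGMetric d) :
    GCompatible d ↔ ∀ x, (𝓝 x).HasBasis (fun ε : G => 0 < ε) (GBall d x) :=
  ⟨fun hc => hc.nhds_hasBasis hd, fun h => TopologicalSpace.ext_nhds fun x =>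
    (hd.nhds_hasBasis_gBall x).eq_of_same_basis (h x)⟩

theorem GCompatible.comp (hc : GCompatible d) (hd : IsGMetric d) {Y : Type u}
    [TopologicalSpace Y] {f : Y → X} (hf : Topology.IsEmbedding f) :
    GCompatible fun a b => d (f a) (f b) :=
  (gCompatible_iff (hd.comp hf.injective)).2 fun y => by
    rw [hf.nhds_eq_comap]
    exact (hc.nhds_hasBasis hd (f y)).comap f

theorem GCompatible.gConvergesTo_iff_tendsto [Nonempty κ.ord.ToType] (hc : GCompatible d)
    (hd : IsGMetric d) {x : κ.ord.ToType → X} {y : X} :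
    GConvergesTo κ d x y ↔ Tendsto x atTop (𝓝 y) := by
  simp only [(hc.nhds_hasBasis hd y).tendsto_right_iff, eventually_atTop, GBall, mem_ofPred_eq,
    hd.symm y]
  rfl

theorem GCompatible.eventually_all_of_mk_lt (hc : GCompatible d) (hd : IsGMetric d)
    (hG : HasDegree G κ) {ι : Type u} (hι : #ι < κ) {x : X} {p : ι → X → Prop}
    (hp : ∀ i, ∀ᶠ y in 𝓝 x, p i y) : ∀ᶠ y in 𝓝 x, ∀ i, p i y := by
  have hb := hc.nhds_hasBasis hd x
  choose r hr hrp using fun i => hb.mem_iff.1 (hp i)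
  obtain ⟨δ, hδ, hδr⟩ := hG.exists_pos_lt_of_mk_lt_s8 (S := range r) (forall_mem_range.2 hr)
    (mk_range_le.trans_lt hι)
  exact hb.mem_iff.2 ⟨δ, hδ, fun y hy i => hrp i (gBall_subset_gBall (hδr _ ⟨i, rfl⟩).le hy)⟩

/-- The set of points all of whose balls of radius `n • β` lie in `U` is clopen, since moving
the centre by less than `β` costs one more `β` in radius; it lies between the two sets because
`n • β ≤ r` for all `n`. -/
theorem GCompatible.exists_isClopen_between (hc : GCompatible d) (hd : IsGMetric d)
    (hG : HasDegree G κ) (hκ : ℵ₀ < κ) (U : Set X) {r : G} (hr : 0 < r) :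
    ∃ C, IsClopen C ∧ {x | GBall d x r ⊆ U} ⊆ C ∧ C ⊆ U := by
  obtain ⟨β, hβ, hβr⟩ := hG.exists_pos_forall_nsmul_le hκ hr
  have shift : ∀ {x y : X}, d x y < β → ∀ n : ℕ,
      GBall d y (n • β) ⊆ GBall d x ((n + 1) • β) := fun {x y} hxy n z hz =>
    calc d x z ≤ d x y + d y z := hd.triangle _ _ _
      _ < β + n • β := add_lt_add hxy hz
      _ = (n + 1) • β := (succ_nsmul' β n).symm
  have near : ∀ x, ∀ᶠ y in 𝓝 x, d x y < β := fun x =>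
    (hc.nhds_hasBasis hd x).mem_of_mem hβ
  refine ⟨{x | ∀ n : ℕ, GBall d x (n • β) ⊆ U}, ⟨?_, ?_⟩,
    fun x hx n => (gBall_subset_gBall (hβr n)).trans hx,
    fun x hx => hx 1 (hd.mem_gBall_self (by simpa using hβ))⟩
  · refine isOpen_compl_iff.1 (isOpen_iff_mem_nhds.2 fun x hx => ?_)
    obtain ⟨n, hn⟩ : ∃ n : ℕ, ¬GBall d x (n • β) ⊆ U := by simpa using hx
    filter_upwards [near x] with y hy hyC
    exact hn ((shift (hd.symm x y ▸ hy) n).trans (hyC (n + 1)))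
  · refine isOpen_iff_mem_nhds.2 fun x hx => ?_
    filter_upwards [near x] with y hy n
    exact (shift hy n).trans (hx (n + 1))

theorem GCompatible.exists_iUnion_isClopen (hc : GCompatible d) (hd : IsGMetric d)
    (hG : HasDegree G κ) (hκ : ℵ₀ < κ) {U : Set X} (hU : IsOpen U) :
    ∃ C : κ.ord.ToType → Set X, (∀ j, IsClopen (C j)) ∧ ⋃ j, C j = U := by
  obtain ⟨s, hs, hsco⟩ := hG.exists_coinitial_seq (aleph0_pos.trans hκ).ne'
  choose C hC hUC hCU using fun j => hc.exists_isClopen_between hd hG hκ U (hs j)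
  refine ⟨C, hC, subset_antisymm (iUnion_subset hCU) fun x hx => ?_⟩
  obtain ⟨θ, hθ, hθU⟩ := (hc.nhds_hasBasis hd x).mem_iff.1 (hU.mem_nhds hx)
  obtain ⟨j, hj⟩ := hsco θ hθ
  exact mem_iUnion.2 ⟨j, hUC j ((gBall_subset_gBall hj).trans hθU)⟩

theorem GCompatible.isOpen_gBall (hc : GCompatible d) (hd : IsGMetric d) (x : X) (ε : G) :
    IsOpen (GBall d x ε) :=
  isOpen_iff_mem_nhds.2 fun y hy => mem_of_superset
    ((hc.nhds_hasBasis hd y).mem_of_mem (sub_pos.2 hy)) (hd.gBall_subset_gBall_sub x y ε)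

theorem GCompatible.t2Space (hc : GCompatible d) (hd : IsGMetric d) (hG : HasDegree G κ)
    (hκ : 1 < κ) : T2Space X := by
  refine ⟨fun x y hxy => ?_⟩
  have hr : 0 < d x y := lt_of_le_of_ne (hd.nonneg x y) fun h => hxy ((hd.eq_zero_iff x y).1 h.symm)
  obtain ⟨η, hη, hηr⟩ := hG.exists_pos_add_self_le hκ hr
  refine ⟨_, _, hc.isOpen_gBall hd x η, hc.isOpen_gBall hd y η, hd.mem_gBall_self hη,
    hd.mem_gBall_self hη, disjoint_left.2 fun z hzx hzy => (hd.triangle x z y).not_gt ?_⟩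
  calc d x z + d z y < η + η := add_lt_add hzx (hd.symm z y ▸ hzy)
    _ ≤ d x y := hηr

theorem GCompatible.eventually_isLeast (hc : GCompatible d) (hd : IsGMetric d)
    (hG : HasDegree G κ) {C : κ.ord.ToType → Set X} (hC : ∀ j, IsClopen (C j)) {x : X}
    {r : κ.ord.ToType} (hr : IsLeast {j | x ∈ C j} r) :
    ∀ᶠ y in 𝓝 x, IsLeast {j | y ∈ C j} r := by
  have hout : ∀ᶠ y in 𝓝 x, ∀ j : Iio r, y ∉ C j :=
    hc.eventually_all_of_mk_lt hd hG (by simpa using mk_Iio_lt r) fun j =>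
      (hC j).isClosed.isOpen_compl.mem_nhds fun hx => (hr.2 hx).not_gt j.2
  filter_upwards [(hC r).isOpen.mem_nhds hr.1, hout] with y hy hy'
  exact ⟨hy, fun j hj => not_lt.1 fun hjr => hy' ⟨j, hjr⟩ hj⟩

end GMetricSpace

section FirstDiff

variable {G : Type u} [Zero G] {ι α : Type u} [LinearOrder ι] [WellFoundedLT ι] {ε : ι → G}
  {f g h : ι → α}

open Classical in
/-- For antitone `ε ≥ 0` this is the ultrametric of the generalized Baire space `ι → α`. -/
noncomputable def firstDiffDist (ε : ι → G) (f g : ι → α) : G :=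
  if h : ∃ i, f i ≠ g i then ε (wellFounded_lt.min {i | f i ≠ g i} h) else 0

theorem firstDiffDist_self (f : ι → α) : firstDiffDist ε f f = 0 := by
  simp [firstDiffDist]

theorem firstDiffDist_comm (f g : ι → α) : firstDiffDist ε f g = firstDiffDist ε g f := by
  unfold firstDiffDist
  by_cases h : ∃ i, f i ≠ g i
  · have h' : ∃ i, g i ≠ f i := let ⟨i, hi⟩ := h; ⟨i, hi.symm⟩
    rw [dif_pos h, dif_pos h']
    congr 2
    ext
    exact ne_comm
  · rw [dif_neg h, dif_neg fun ⟨i, hi⟩ => h ⟨i, hi.symm⟩]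

theorem exists_firstDiffDist_eq (hfg : f ≠ g) :
    ∃ i, f i ≠ g i ∧ (∀ j < i, f j = g j) ∧ firstDiffDist ε f g = ε i := by
  have h : ∃ i, f i ≠ g i := Function.ne_iff.1 hfg
  refine ⟨_, wellFounded_lt.min_mem {i | f i ≠ g i} h, fun j hj => ?_, dif_pos h⟩
  by_contra hne
  exact wellFounded_lt.not_lt_min {i | f i ≠ g i} hne hj

variable [LinearOrder G]

theorem firstDiffDist_nonneg (hε0 : ∀ i, 0 ≤ ε i) (f g : ι → α) : 0 ≤ firstDiffDist ε f g := by
  rcases eq_or_ne f g with rfl | hfg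
  · rw [firstDiffDist_self]
  · obtain ⟨i, -, -, hi⟩ := exists_firstDiffDist_eq (ε := ε) hfg
    exact hi ▸ hε0 i

theorem le_firstDiffDist (hε : Antitone ε) {i : ι} (hi : f i ≠ g i) :
    ε i ≤ firstDiffDist ε f g := by
  obtain ⟨m, -, hm, hdist⟩ := exists_firstDiffDist_eq (ε := ε) (Function.ne_iff.2 ⟨i, hi⟩)
  exact hdist ▸ hε (not_lt.1 fun him => hi (hm i him))

theorem firstDiffDist_le (hε0 : ∀ i, 0 ≤ ε i) (hε : Antitone ε) {i : ι}
    (hi : ∀ j ≤ i, f j = g j) : firstDiffDist ε f g ≤ ε i := by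
  rcases eq_or_ne f g with rfl | hfg
  · exact (firstDiffDist_self f).trans_le (hε0 i)
  · obtain ⟨m, hm, -, hdist⟩ := exists_firstDiffDist_eq (ε := ε) hfg
    exact hdist ▸ hε (not_le.1 fun hmi => hm (hi m hmi)).le

theorem firstDiffDist_le_max (hε0 : ∀ i, 0 ≤ ε i) (hε : Antitone ε) (f g h : ι → α) :
    firstDiffDist ε f h ≤ max (firstDiffDist ε f g) (firstDiffDist ε g h) := by
  rcases eq_or_ne f h with rfl | hfh
  · exact (firstDiffDist_self f).trans_le (le_max_of_le_left (firstDiffDist_nonneg hε0 f g))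
  obtain ⟨m, hm, -, hdist⟩ := exists_firstDiffDist_eq (ε := ε) hfh
  rw [hdist]
  by_cases hfg : f m = g m
  · exact le_max_of_le_right (le_firstDiffDist hε (hfg ▸ hm))
  · exact le_max_of_le_left (le_firstDiffDist hε hfg)

end FirstDiff

section Refinement

variable {κ : Cardinal.{u}} {G : Type u} [AddCommGroup G] [LinearOrder G] {X : Type u}
  {d : X → X → G} {ι α : Type u} [LinearOrder ι] [WellFoundedLT ι] {ε : ι → G}

theorem GCauchy.exists_forall_ge_eq {z : κ.ord.ToType → ι → α}
    (hz : GCauchy κ (firstDiffDist ε) z) (hε0 : ∀ i, 0 < ε i) (hε : Antitone ε) (i : ι) :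
    ∃ a, ∀ b, a ≤ b → z b i = z a i := by
  obtain ⟨a, ha⟩ := hz (ε i) (hε0 i)
  exact ⟨a, fun b hb => by_contra fun h => (le_firstDiffDist hε h).not_gt (ha b hb a le_rfl)⟩

variable [IsOrderedAddMonoid G]

theorem IsGMetric.max_firstDiffDist (hd : IsGMetric d) (hε0 : ∀ i, 0 ≤ ε i) (hε : Antitone ε)
    (ρ : X → ι → α) : IsGMetric fun x y => max (d x y) (firstDiffDist ε (ρ x) (ρ y)) where
  nonneg x y := (hd.nonneg x y).trans (le_max_left _ _)
  eq_zero_iff x y := by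
    refine ⟨fun h => (hd.eq_zero_iff x y).1 (le_antisymm (h ▸ le_max_left _ _) (hd.nonneg x y)),
      ?_⟩
    rintro rfl
    rw [(hd.eq_zero_iff x x).2 rfl, firstDiffDist_self, max_self]
  symm x y := by rw [hd.symm, firstDiffDist_comm]
  triangle x y z := max_le
    ((hd.triangle x y z).trans (add_le_add (le_max_left _ _) (le_max_left _ _)))
    ((firstDiffDist_le_max hε0 hε _ _ _).trans <|
      (max_le_add_of_nonneg (firstDiffDist_nonneg hε0 _ _) (firstDiffDist_nonneg hε0 _ _)).trans
        (add_le_add (le_max_right _ _) (le_max_right _ _)))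

theorem GCompatible.max_firstDiffDist [Nontrivial G] [TopologicalSpace X] (hc : GCompatible d)
    (hd : IsGMetric d) (hG : HasDegree G κ) (hκ : ℵ₀ ≤ κ) {ε : κ.ord.ToType → G}
    (hε0 : ∀ i, 0 ≤ ε i) (hε : Antitone ε) (hεco : ∀ θ : G, 0 < θ → ∃ i, ε i < θ)
    {ρ : X → κ.ord.ToType → α} (hρ : ∀ x i, ∀ᶠ y in 𝓝 x, ρ y i = ρ x i) :
    GCompatible fun x y => max (d x y) (firstDiffDist ε (ρ x) (ρ y)) := by
  refine (gCompatible_iff (hd.max_firstDiffDist hε0 hε ρ)).2 fun x => ⟨fun t => ?_⟩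
  have hb := hc.nhds_hasBasis hd x
  refine ⟨fun ht => ?_, fun ⟨θ, hθ, hθt⟩ => ?_⟩
  · obtain ⟨θ, hθ, hθt⟩ := hb.mem_iff.1 ht
    exact ⟨θ, hθ, fun y hy => hθt (lt_of_le_of_lt (le_max_left _ _) hy)⟩
  · obtain ⟨i, hi⟩ := hεco θ hθ
    have hagree : ∀ᶠ y in 𝓝 x, ∀ j : Iic i, ρ y j = ρ x j :=
      hc.eventually_all_of_mk_lt hd hG (mk_Iic_lt hκ i) fun j => hρ x j
    filter_upwards [hb.mem_of_mem hθ, hagree] with y hy hy'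
    exact hθt (max_lt hy ((firstDiffDist_le hε0 hε fun j hj => (hy' ⟨j, hj⟩).symm).trans_lt hi))

end Refinement

theorem HasWeightLE.subtype {κ : Cardinal.{u}} {X : Type u} [TopologicalSpace X]
    (h : HasWeightLE κ X) (Y : Set X) : HasWeightLE κ Y := by
  obtain ⟨B, hB, hBcard⟩ := h
  exact ⟨_, hB.isInducing IsInducing.subtypeVal, mk_image_le.trans hBcard⟩

section Subspace

variable {κ : Cardinal.{u}} {G : Type u} [AddCommGroup G] [LinearOrder G] [IsOrderedAddMonoid G]
  [Nontrivial G] {X : Type u} [TopologicalSpace X] {dX : X → X → G} {Y : Set X}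
  {dY : Y → Y → G}

theorem mem_of_mem_closure_of_forall_diam_lt (hκ : ℵ₀ ≤ κ)
    (hG : HasDegree G κ) (hdX : IsGMetric dX) (hcX : GCompatible dX) (hdY : IsGMetric dY)
    (hcY : GCompatible dY) (hcomplY : GCauchyComplete κ dY) {ε : κ.ord.ToType → G}
    (hε0 : ∀ a, 0 < ε a) (hεco : ∀ θ : G, 0 < θ → ∃ a, ε a < θ) {x : X} (hx : x ∈ closure Y)
    (hW : ∀ a, ∃ W ∈ 𝓝 x, ∀ u v : Y, (u : X) ∈ W → (v : X) ∈ W → dY u v < ε a) : x ∈ Y := by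
  have := nonempty_ord_toType (aleph0_pos.trans_le hκ).ne'
  have := hcX.t2Space hdX hG (one_lt_aleph0.trans_le hκ)
  choose W hWx hW using hW
  have hP : ∀ a, ∀ᶠ z in 𝓝 x, ∀ b : Iic a, z ∈ W b ∩ GBall dX x (ε b) := fun a =>
    hcX.eventually_all_of_mk_lt hdX hG (mk_Iic_lt hκ a) fun b =>
      inter_mem (hWx b) ((hcX.nhds_hasBasis hdX x).mem_of_mem (hε0 b))
  choose z hz using fun a => mem_closure_iff_nhds.1 hx _ (hP a)
  let y : κ.ord.ToType → Y := fun a => ⟨z a, (hz a).2⟩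
  have hzW : ∀ a b, a ≤ b → z b ∈ W a ∩ GBall dX x (ε a) := fun a b hab => (hz b).1 ⟨a, hab⟩
  have hy : GCauchy κ dY y := fun θ hθ => by
    obtain ⟨a, ha⟩ := hεco θ hθ
    exact ⟨a, fun b hb c hc => (hW a (y b) (y c) (hzW a b hb).1 (hzW a c hc).1).trans ha⟩
  obtain ⟨y', hy'⟩ := hcomplY y hy
  have hzy' : Tendsto z atTop (𝓝 (y' : X)) :=
    (continuous_subtype_val.tendsto _).comp ((hcY.gConvergesTo_iff_tendsto hdY).1 hy')
  have hzx : Tendsto z atTop (𝓝 x) := (hcX.nhds_hasBasis hdX x).tendsto_right_iff.2 fun θ hθ => by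
    obtain ⟨a, ha⟩ := hεco θ hθ
    exact eventually_atTop.2 ⟨a, fun b hb => gBall_subset_gBall ha.le (hzW a b hb).2⟩
  exact tendsto_nhds_unique hzx hzy' ▸ y'.2

theorem isGDeltaKappa_of_gCauchyComplete (hκ : ℵ₀ ≤ κ) (hG : HasDegree G κ)
    (hdX : IsGMetric dX) (hcX : GCompatible dX) (hdY : IsGMetric dY) (hcY : GCompatible dY)
    (hcomplY : GCauchyComplete κ dY) : IsGDeltaKappa κ Y := by
  obtain ⟨ε, hε0, -, hεco⟩ := hG.exists_strictAnti_coinitial hκ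
  let DiamLt (a : κ.ord.ToType) (W : Set X) : Prop :=
    ∀ u v : Y, (u : X) ∈ W → (v : X) ∈ W → dY u v < ε a
  refine ⟨fun a => (⋃ y : Y, GBall dX y (ε a)) ∩ ⋃₀ {W | IsOpen W ∧ DiamLt a W},
    fun a => (isOpen_iUnion fun y => hcX.isOpen_gBall hdX _ _).inter
      (isOpen_sUnion fun W hW => hW.1), subset_antisymm ?_ ?_⟩
  · intro y hy
    refine mem_iInter.2 fun a => ⟨mem_iUnion.2 ⟨⟨y, hy⟩, hdX.mem_gBall_self (hε0 a)⟩, ?_⟩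
    obtain ⟨η, hη, hηa⟩ := hG.exists_pos_add_self_le (one_lt_aleph0.trans_le hκ) (hε0 a)
    obtain ⟨W, hWo, hW⟩ := isOpen_induced_iff.1 (hcY.isOpen_gBall hdY ⟨y, hy⟩ η)
    have hWη : ∀ u : Y, (u : X) ∈ W → dY ⟨y, hy⟩ u < η := fun u hu =>
      (hW ▸ hu : u ∈ GBall dY ⟨y, hy⟩ η)
    refine ⟨W, ⟨hWo, fun u v hu hv => ?_⟩, ?_⟩
    · calc dY u v ≤ dY u ⟨y, hy⟩ + dY ⟨y, hy⟩ v := hdY.triangle _ _ _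
        _ < η + η := by rw [hdY.symm u]; exact add_lt_add (hWη u hu) (hWη v hv)
        _ ≤ ε a := hηa
    · exact (hW ▸ hdY.mem_gBall_self hη : (⟨y, hy⟩ : Y) ∈ Subtype.val ⁻¹' W)
  · intro x hx
    have hx' := mem_iInter.1 hx
    refine mem_of_mem_closure_of_forall_diam_lt hκ hG hdX hcX hdY hcY hcomplY hε0 hεco ?_
      fun a => ?_
    · refine (mem_closure_iff_nhds_basis (hcX.nhds_hasBasis hdX x)).2 fun θ hθ => ?_
      obtain ⟨a, ha⟩ := hεco θ hθ
      obtain ⟨y, hy⟩ := mem_iUnion.1 (hx' a).1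
      exact ⟨y, y.2, lt_trans (hdX.symm x y ▸ hy) ha⟩
    · obtain ⟨W, ⟨hWo, hW⟩, hxW⟩ := (hx' a).2
      exact ⟨W, hWo.mem_nhds hxW, hW⟩

/-- The ranks `ρ y i` are locally constant, so the refined metric induces the topology of `Y`;
along a Cauchy sequence they stabilise, which pins the `dX`-limit inside each `⋃ j, C i j`. -/
theorem gPolish_of_isGDeltaKappa (hκ : ℵ₀ < κ) (hG : HasDegree G κ)
    (hX : GPolish G κ X) (hY : IsGDeltaKappa κ Y) : GPolish G κ Y := by
  obtain ⟨hw, dX, hdX, hcX, hcomplX⟩ := hX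
  obtain ⟨U, hU, rfl⟩ := hY
  choose C hC hCU using fun i => hcX.exists_iUnion_isClopen hdX hG hκ (hU i)
  obtain ⟨ε, hε0, hεanti, hεco⟩ := hG.exists_strictAnti_coinitial hκ.le
  have hrank : ∀ (y : ↥(⋂ i, U i)) i, ∃ r, IsLeast {j | (y : X) ∈ C i j} r := fun y i => by
    have hne : {j | (y : X) ∈ C i j}.Nonempty :=
      mem_iUnion.1 (hCU i ▸ mem_iInter.1 y.2 i)
    exact ⟨_, wellFounded_lt.min_mem _ hne, fun j hj => wellFounded_lt.min_le hj⟩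
  choose ρ hρ using hrank
  have hρloc : ∀ y i, ∀ᶠ z in 𝓝 y, ρ z i = ρ y i := fun y i =>
    ((continuous_subtype_val.tendsto y).eventually
      (hcX.eventually_isLeast hdX hG (hC i) (hρ y i))).mono fun z hz => (hρ z i).unique hz
  have hdY := hdX.comp (Y := ↥(⋂ i, U i)) Subtype.val_injective
  have hcY := hcX.comp hdX (Y := ↥(⋂ i, U i)) IsEmbedding.subtypeVal
  have hd' := hdY.max_firstDiffDist (fun i => (hε0 i).le) hεanti.antitone ρ
  have hc' := hcY.max_firstDiffDist hdY hG hκ.le (fun i => (hε0 i).le) hεanti.antitone hεco hρloc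
  refine ⟨hw.subtype _, _, hd', hc', fun y hy => ?_⟩
  have := nonempty_ord_toType (aleph0_pos.trans hκ).ne'
  obtain ⟨x, hx⟩ := hcomplX _ fun θ hθ => (hy θ hθ).imp fun a ha b hb c hc =>
    lt_of_le_of_lt (le_max_left _ _) (ha b hb c hc)
  have hρy : GCauchy κ (firstDiffDist ε) fun a => ρ (y a) := fun θ hθ =>
    (hy θ hθ).imp fun a ha b hb c hc => lt_of_le_of_lt (le_max_right _ _) (ha b hb c hc)
  have hxt := (hcX.gConvergesTo_iff_tendsto hdX).1 hx
  have hxU : x ∈ ⋂ i, U i := mem_iInter.2 fun i => by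
    obtain ⟨a, ha⟩ := hρy.exists_forall_ge_eq hε0 hεanti.antitone i
    rw [← hCU i]
    exact mem_iUnion.2 ⟨_, (hC i _).isClosed.mem_of_tendsto hxt
      (eventually_atTop.2 ⟨a, fun b hb => ha b hb ▸ (hρ (y b) i).1⟩)⟩
  exact ⟨⟨x, hxU⟩, (hc'.gConvergesTo_iff_tendsto hd').2 (tendsto_subtype_rng.2 hxt)⟩

end Subspace

theorem stmt_8_general (κ : Cardinal.{u}) (hunc : ℵ₀ < κ)
    (G : Type u) [AddCommGroup G] [LinearOrder G] [IsOrderedAddMonoid G] (hG : HasDegree G κ)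
    (X : Type u) [TopologicalSpace X]
    (hX : GPolish G κ X) (Y : Set X) :
    GPolish G κ ↥Y ↔ IsGDeltaKappa κ Y := by
  have := hG.nontrivial (aleph0_pos.trans hunc).ne'
  refine ⟨fun ⟨_, dY, hdY, hcY, hcomplY⟩ => ?_, gPolish_of_isGDeltaKappa hunc hG hX⟩
  obtain ⟨-, dX, hdX, hcX, -⟩ := hX
  exact isGDeltaKappa_of_gCauchyComplete hunc.le hG hdX hcX hdY hcY hcomplY

/-- a subspace of a 𝔾-Polish space is 𝔾-Polish iff it is G_δ^κ. -/
theorem stmt_8 (κ : Cardinal.{u}) (hreg : κ.IsRegular) (hunc : ℵ₀ < κ)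
    (hpow : (2 : Cardinal.{u}) ^< κ = κ)
    (G : Type u) [AddCommGroup G] [LinearOrder G] [IsOrderedAddMonoid G] (hG : HasDegree G κ)
    (X : Type u) [TopologicalSpace X] [T2Space X] [RegularSpace X]
    (hX : GPolish G κ X) (Y : Set X) :
    GPolish G κ ↥Y ↔ IsGDeltaKappa κ Y :=
  stmt_8_general κ hunc G hG X hX Y

end GDST
end

section
/- Every closed subset C of the generalized Baire space κ^κ is κ-Borel isomorphic to a superclosed subset C′ of κ^κ. -/
universe u v

open Cardinal Set

namespace GDST

/-!
If `C` has at most `κ` points, every subset of `C` is `κ`-Borel (points are closed), so any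
bijection onto a superclosed set of the same size, such as a product of singletons and one
factor of that size, will do.

Otherwise let `C'` be `C` together with the branches that leave the tree of `C` at a limit
level `γ`, continued by a constant afterwards. This is the body of a pruned `<κ`-closed tree,
and such a branch is determined by its restriction to `γ`, so by regularity and `2^{<κ} = κ`
there are at most `κ` of them. A subset of `C` of size `κ` absorbs them, and a bijection
`C ≃ C'` that moves at most `κ` points is `κ`-Borel in both directions.
-/

section KBorel

variable {κ : Cardinal.{u}} {X Y : Type u} [TopologicalSpace X] [TopologicalSpace Y]

theorem KBorel.of_isClosed {S : Set X} (hS : IsClosed S) : KBorel κ S :=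
  compl_compl S ▸ KBorel.compl _ (KBorel.of_isOpen _ hS.isOpen_compl)

theorem KBorel.union (hκ : 2 ≤ κ) {A B : Set X} (hA : KBorel κ A) (hB : KBorel κ B) :
    KBorel κ (A ∪ B) := by
  have hunion : A ∪ B = ⋃ i : ULift.{u} Bool, cond i.down A B := by
    rw [Set.union_eq_iUnion]
    exact (Equiv.ulift.iSup_comp (g := fun b => cond b A B)).symm
  rw [hunion]
  refine KBorel.iUnion _ _ (by simpa using hκ) fun i => ?_
  cases i.down
  · exact hB
  · exact hA

theorem KBorel.inter (hκ : 2 ≤ κ) {A B : Set X} (hA : KBorel κ A) (hB : KBorel κ B) :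
    KBorel κ (A ∩ B) := by
  rw [← compl_compl (A ∩ B), Set.compl_inter]
  exact KBorel.compl _ (KBorel.union hκ (KBorel.compl _ hA) (KBorel.compl _ hB))

theorem KBorel.of_mk_le [T1Space X] {S : Set X} (hS : #S ≤ κ) : KBorel κ S := by
  rw [← Set.iUnion_of_singleton_coe S]
  exact KBorel.iUnion _ _ hS fun _ => KBorel.of_isClosed isClosed_singleton

theorem KBorel.preimage {f : X → Y} (hf : Continuous f) {S : Set Y} (hS : KBorel κ S) :
    KBorel κ (f ⁻¹' S) := by
  induction hS with
  | of_isOpen U hU => exact KBorel.of_isOpen _ (hU.preimage hf)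
  | compl S _ ih => exact Set.preimage_compl ▸ KBorel.compl _ ih
  | iUnion ι g hι _ ih =>
    rw [Set.preimage_iUnion]
    exact KBorel.iUnion _ _ hι ih

theorem KBorel.image_val (hκ : 2 ≤ κ) {Z : Set X} (hZ : KBorel κ Z) {S : Set Z}
    (hS : KBorel κ S) : KBorel κ (Subtype.val '' S) := by
  induction hS with
  | of_isOpen U hU =>
    obtain ⟨V, hV, rfl⟩ := isOpen_induced_iff.mp hU
    rw [Subtype.image_preimage_coe]
    exact KBorel.inter hκ hZ (KBorel.of_isOpen _ hV)
  | compl S _ ih =>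
    rw [Set.image_val_compl]
    exact KBorel.inter hκ hZ (KBorel.compl _ ih)
  | iUnion ι g hι _ ih =>
    rw [Set.image_iUnion]
    exact KBorel.iUnion _ _ hι ih

def KBorelMeasurable (κ : Cardinal.{u}) (f : X → Y) : Prop :=
  ∀ S : Set Y, KBorel κ S → KBorel κ (f ⁻¹' S)

theorem kBorelMeasurable_of_mk_le [T1Space X] (hX : #X ≤ κ) (f : X → Y) :
    KBorelMeasurable κ f :=
  fun _ _ => KBorel.of_mk_le ((Cardinal.mk_set_le _).trans hX)

theorem kBorelMeasurable_of_val_apply_eq_of_notMem [T1Space X] (hκ : 2 ≤ κ) {A Z : Set X}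
    (hZ : KBorel κ Z) (f : A → Z) {W : Set X} (hW : #W ≤ κ)
    (hf : ∀ x : A, (x : X) ∉ W → (f x : X) = x) : KBorelMeasurable κ f := by
  intro S hS
  set V : Set A := Subtype.val ⁻¹' W
  have hV : #V ≤ κ := (Cardinal.mk_preimage_of_injective _ _ Subtype.val_injective).trans hW
  have hsplit :
      f ⁻¹' S = (f ⁻¹' S ∩ V) ∪ (Subtype.val ⁻¹' (Subtype.val '' S) \ V) := by
    ext x
    by_cases hx : x ∈ V
    · simp [hx]
    · have hfx : ∀ s : Z, (s : X) = x ↔ s = f x := fun s => by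
        rw [← hf x hx, Subtype.val_inj]
      simp [hx, hfx]
  rw [hsplit]
  exact KBorel.union hκ
    (KBorel.of_mk_le ((Cardinal.mk_le_mk_of_subset Set.inter_subset_right).trans hV))
    (KBorel.inter hκ (KBorel.preimage continuous_subtype_val (KBorel.image_val hκ hZ hS))
      (KBorel.compl _ (KBorel.of_mk_le hV)))

end KBorel

section CardinalArithmetic

variable {κ : Cardinal.{u}}

theorem exists_forall_lt_of_isRegular (hreg : κ.IsRegular) {ι : Type u} (hι : #ι < κ)
    (f : ι → κ.ord.ToType) : ∃ a, ∀ i, f i < a := by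
  by_contra! h
  have hcof : IsCofinal (Set.range f) := fun a => by
    obtain ⟨i, hi⟩ := h a
    exact ⟨f i, Set.mem_range_self i, hi⟩
  have := (Order.cof_le hcof).trans Cardinal.mk_range_le
  rw [Ordinal.cof_toType, hreg.cof_ord] at this
  exact this.not_gt hι

theorem power_le_of_isRegular (hreg : κ.IsRegular) (hpow : (2 : Cardinal.{u}) ^< κ = κ)
    {μ : Cardinal.{u}} (hμ : μ < κ) : κ ^ μ ≤ κ := by
  have hκ := hreg.aleph0_le
  set Bounded : κ.ord.ToType → Set (μ.ord.ToType → κ.ord.ToType) :=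
    fun a => {f | ∀ i, f i < a}
  have hcover : ⋃ a, Bounded a = Set.univ :=
    Set.eq_univ_of_forall fun f => Set.mem_iUnion.2 <|
      exists_forall_lt_of_isRegular hreg (by rwa [Cardinal.mk_ord_toType]) f
  have hBounded : ∀ a, #(Bounded a) ≤ κ := fun a => by
    have hc : #(Set.Iio a) < κ := by simpa using Cardinal.mk_Iio_lt a
    calc #(Bounded a) ≤ #(μ.ord.ToType → Set.Iio a) :=
          Cardinal.mk_le_of_injective (f := fun f i => ⟨f.1 i, f.2 i⟩) fun f g hfg =>
            Subtype.ext <| funext fun i => congrArg Subtype.val (congrFun hfg i)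
      _ = #(Set.Iio a) ^ μ := by rw [← Cardinal.power_def, Cardinal.mk_ord_toType]
      _ ≤ (2 ^ #(Set.Iio a)) ^ μ := Cardinal.power_le_power_right (Cardinal.cantor _).le
      _ = 2 ^ (#(Set.Iio a) * μ) := Cardinal.power_mul.symm
      _ ≤ 2 ^< κ := Cardinal.le_powerlt 2 (Cardinal.mul_lt_of_lt hκ hc hμ)
      _ = κ := hpow
  calc κ ^ μ = #(Set.univ : Set (μ.ord.ToType → κ.ord.ToType)) := by
        rw [Cardinal.mk_univ, ← Cardinal.power_def, Cardinal.mk_ord_toType,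
          Cardinal.mk_ord_toType]
    _ ≤ Cardinal.sum fun a => #(Bounded a) := hcover ▸ Cardinal.mk_iUnion_le_sum_mk
    _ ≤ Cardinal.sum fun _ : κ.ord.ToType => κ := Cardinal.sum_le_sum _ _ hBounded
    _ = κ := by rw [Cardinal.sum_const', Cardinal.mk_ord_toType, Cardinal.mul_eq_self hκ]

end CardinalArithmetic

section GenBaire

variable {κ : Cardinal.{u}}

def cylinder (a : κ.ord.ToType) (y : GenBaire κ) : Set (GenBaire κ) :=
  {x | ∀ b, b < a → x b = y b}

theorem isOpen_cylinder (a : κ.ord.ToType) (y : GenBaire κ) : IsOpen (cylinder a y) :=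
  TopologicalSpace.GenerateOpen.basic _ ⟨a, y, rfl⟩

theorem mem_cylinder_self (a : κ.ord.ToType) (y : GenBaire κ) : y ∈ cylinder a y :=
  fun _ _ => rfl

theorem exists_cylinder_subset_of_isOpen [Nonempty κ.ord.ToType] {U : Set (GenBaire κ)}
    (hU : IsOpen U) {x : GenBaire κ} (hx : x ∈ U) : ∃ a, cylinder a x ⊆ U := by
  induction hU generalizing x with
  | basic V hV =>
    obtain ⟨a, y, rfl⟩ := hV
    exact ⟨a, fun w hw b hb => (hw b hb).trans (hx b hb)⟩
  | univ => exact ⟨Classical.arbitrary _, Set.subset_univ _⟩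
  | inter V W _ _ ihV ihW =>
    obtain ⟨a, ha⟩ := ihV hx.1
    obtain ⟨a', ha'⟩ := ihW hx.2
    exact ⟨max a a', fun w hw =>
      ⟨ha fun b hb => hw b (hb.trans_le (le_max_left a a')),
        ha' fun b hb => hw b (hb.trans_le (le_max_right a a'))⟩⟩
  | sUnion S _ ih =>
    obtain ⟨V, hVS, hxV⟩ := hx
    obtain ⟨a, ha⟩ := ih V hVS hxV
    exact ⟨a, ha.trans (Set.subset_sUnion_of_mem hVS)⟩

instance [NoMaxOrder κ.ord.ToType] : T2Space (GenBaire κ) where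
  t2 x y hxy := by
    obtain ⟨b, hb⟩ := Function.ne_iff.1 hxy
    obtain ⟨a, hba⟩ := exists_gt b
    exact ⟨cylinder a x, cylinder a y, isOpen_cylinder a x, isOpen_cylinder a y,
      mem_cylinder_self a x, mem_cylinder_self a y,
      Set.disjoint_left.2 fun w hwx hwy => hb ((hwx b hba).symm.trans (hwy b hba))⟩

end GenBaire

section Trees

variable {κ : Cardinal.{u}}

theorem isClosed_treeBody {T : Set (TreeSeq κ)} (hT : IsTreeOn κ T) :
    IsClosed (TreeBody κ T) := by
  refine isOpen_compl_iff.1 (isOpen_iff_forall_mem_open.2 fun x hx => ?_)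
  obtain ⟨a, ha⟩ := not_forall.1 hx
  exact ⟨cylinder a x, fun w hw hwT => ha ((hT.1 a w x hw).1 (hwT a)),
    isOpen_cylinder a x, mem_cylinder_self a x⟩

theorem isSuperclosedTree_empty : IsSuperclosedTree κ ∅ :=
  ⟨⟨fun _ _ _ _ => Iff.rfl, fun _ _ h => h.elim⟩, fun _ _ h => h.elim,
    fun _ ha _ h => (h _ ha.1.choose_spec).elim⟩

theorem treeBody_empty [Nonempty κ.ord.ToType] : TreeBody κ ∅ = ∅ :=
  Set.eq_empty_of_forall_notMem fun _ h => h (Classical.arbitrary _)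

def treeOf (κ : Cardinal.{u}) (C : Set (GenBaire κ)) : Set (TreeSeq κ) :=
  {p | ∃ y ∈ C, ∀ b, b < p.1 → y b = p.2 b}

theorem isTreeOn_treeOf (C : Set (GenBaire κ)) : IsTreeOn κ (treeOf κ C) := by
  refine ⟨fun a x x' hxx' => ⟨?_, ?_⟩, ?_⟩
  · rintro ⟨y, hyC, hy⟩
    exact ⟨y, hyC, fun b hb => (hy b hb).trans (hxx' b hb)⟩
  · rintro ⟨y, hyC, hy⟩
    exact ⟨y, hyC, fun b hb => (hy b hb).trans (hxx' b hb).symm⟩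
  · rintro a x ⟨y, hyC, hy⟩ b hba
    exact ⟨y, hyC, fun c hc => hy c (hc.trans_le hba)⟩

theorem treeBody_treeOf_subset [Nonempty κ.ord.ToType] {C : Set (GenBaire κ)}
    (hC : IsClosed C) : TreeBody κ (treeOf κ C) ⊆ C := by
  intro x hx
  by_contra hxC
  obtain ⟨a, ha⟩ := exists_cylinder_subset_of_isOpen hC.isOpen_compl hxC
  obtain ⟨y, hyC, hy⟩ := hx a
  exact ha hy hyC

end Trees

section DeadBranches

variable {κ : Cardinal.{u}} {C : Set (GenBaire κ)} {z : κ.ord.ToType}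

def IsDeadAt (κ : Cardinal.{u}) (C : Set (GenBaire κ)) (γ : κ.ord.ToType)
    (x : κ.ord.ToType → κ.ord.ToType) : Prop :=
  IsLimitElt γ ∧ (γ, x) ∉ treeOf κ C ∧ ∀ β, β < γ → (β, x) ∈ treeOf κ C

theorem IsDeadAt.unique {γ γ' : κ.ord.ToType} {x : κ.ord.ToType → κ.ord.ToType}
    (h : IsDeadAt κ C γ x) (h' : IsDeadAt κ C γ' x) : γ = γ' := by
  rcases lt_trichotomy γ γ' with hlt | heq | hgt
  · exact absurd (h'.2.2 γ hlt) h.2.1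
  · exact heq
  · exact absurd (h.2.2 γ' hgt) h'.2.1

theorem IsDeadAt.congr {γ : κ.ord.ToType} {x y : κ.ord.ToType → κ.ord.ToType}
    (hxy : ∀ b, b < γ → x b = y b) (h : IsDeadAt κ C γ x) : IsDeadAt κ C γ y := by
  obtain ⟨hlim, hout, hin⟩ := h
  exact ⟨hlim, fun hy => hout (((isTreeOn_treeOf C).1 γ x y hxy).2 hy), fun β hβ =>
    ((isTreeOn_treeOf C).1 β x y fun b hb => hxy b (hb.trans hβ)).1 (hin β hβ)⟩

def fillTree (κ : Cardinal.{u}) (C : Set (GenBaire κ)) (z : κ.ord.ToType) :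
    Set (TreeSeq κ) :=
  treeOf κ C ∪
    {p | ∃ γ, γ ≤ p.1 ∧ IsDeadAt κ C γ p.2 ∧ ∀ b, γ ≤ b → b < p.1 → p.2 b = z}

def deadBranches (κ : Cardinal.{u}) (C : Set (GenBaire κ)) (z : κ.ord.ToType) :
    Set (GenBaire κ) :=
  {x | ∃ γ, IsDeadAt κ C γ x ∧ ∀ b, γ ≤ b → x b = z}

theorem IsDeadAt.eq_of_mem_fillTree {γ a b : κ.ord.ToType} {x : κ.ord.ToType → κ.ord.ToType}
    (hd : IsDeadAt κ C γ x) (ha : (a, x) ∈ fillTree κ C z) (hγb : γ ≤ b) (hba : b < a) :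
    x b = z := by
  rcases ha with ha | ⟨γ', -, hd', hz⟩
  · exact absurd ((isTreeOn_treeOf C).2 a x ha γ (hγb.trans hba.le)) hd.2.1
  · exact hz b (hd.unique hd' ▸ hγb) hba

theorem fillTree_congr {a : κ.ord.ToType} {x y : κ.ord.ToType → κ.ord.ToType}
    (hxy : ∀ b, b < a → x b = y b) (h : (a, x) ∈ fillTree κ C z) :
    (a, y) ∈ fillTree κ C z := by
  rcases h with h | ⟨γ, hγa, hd, hz⟩
  · exact Or.inl (((isTreeOn_treeOf C).1 a x y hxy).1 h)
  · exact Or.inr ⟨γ, hγa, hd.congr fun b hb => hxy b (hb.trans_le hγa),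
      fun b hγb hba => (hxy b hba).symm.trans (hz b hγb hba)⟩

theorem isTreeOn_fillTree : IsTreeOn κ (fillTree κ C z) := by
  refine ⟨fun a x y hxy =>
    ⟨fillTree_congr hxy, fillTree_congr fun b hb => (hxy b hb).symm⟩, ?_⟩
  rintro a x (h | ⟨γ, hγa, hd, hz⟩) b hba
  · exact Or.inl ((isTreeOn_treeOf C).2 a x h b hba)
  · rcases le_or_gt γ b with hγb | hbγ
    · exact Or.inr ⟨γ, hγb, hd, fun c hγc hcb => hz c hγc (hcb.trans_le hba)⟩
    · exact Or.inl (hd.2.2 b hbγ)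

theorem treePruned_fillTree : TreePruned κ (fillTree κ C z) := by
  classical
  rintro a x (⟨y, hyC, hy⟩ | ⟨γ, hγa, hd, hz⟩) c hac
  · exact ⟨y, hy, Or.inl ⟨y, hyC, fun _ _ => rfl⟩⟩
  · refine ⟨fun b => if b < γ then x b else z, fun b hba => ?_, Or.inr ⟨γ, ?_, ?_, ?_⟩⟩
    · by_cases hbγ : b < γ
      · exact if_pos hbγ
      · exact (if_neg hbγ).trans (hz b (not_lt.1 hbγ) hba).symm
    · exact hγa.trans hac
    · exact hd.congr fun b hb => (if_pos hb).symm
    · exact fun b hγb _ => if_neg (not_lt.2 hγb)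

theorem treeLtClosed_fillTree : TreeLtClosed κ (fillTree κ C z) := by
  intro a ha x hx
  by_cases hT : ∀ b, b < a → (b, x) ∈ treeOf κ C
  · by_cases haT : (a, x) ∈ treeOf κ C
    · exact Or.inl haT
    · exact Or.inr ⟨a, le_rfl, ⟨ha, haT, hT⟩, fun b hab hba => absurd hba (not_lt.2 hab)⟩
  · obtain ⟨b₀, hb₀a, hb₀⟩ := not_forall₂.1 hT
    obtain ⟨γ, hγb₀, hd, -⟩ := (hx b₀ hb₀a).resolve_left hb₀
    refine Or.inr ⟨γ, hγb₀.trans hb₀a.le, hd, fun b hγb hba => ?_⟩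
    obtain ⟨c, hbc, hca⟩ := ha.2 b hba
    exact hd.eq_of_mem_fillTree (hx c hca) hγb hbc

theorem isSuperclosedTree_fillTree : IsSuperclosedTree κ (fillTree κ C z) :=
  ⟨isTreeOn_fillTree, treePruned_fillTree, treeLtClosed_fillTree⟩

theorem treeBody_fillTree [Nonempty κ.ord.ToType] [NoMaxOrder κ.ord.ToType] (hC : IsClosed C) :
    TreeBody κ (fillTree κ C z) = C ∪ deadBranches κ C z := by
  ext x
  constructor
  · intro hx
    by_cases hT : x ∈ TreeBody κ (treeOf κ C)
    · exact Or.inl (treeBody_treeOf_subset hC hT)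
    obtain ⟨a, ha⟩ := not_forall.1 hT
    obtain ⟨γ, -, hd, -⟩ := (hx a).resolve_left ha
    refine Or.inr ⟨γ, hd, fun b hγb => ?_⟩
    obtain ⟨c, hbc⟩ := exists_gt b
    exact hd.eq_of_mem_fillTree (hx c) hγb hbc
  · rintro (hxC | ⟨γ, hd, hz⟩) a
    · exact Or.inl ⟨x, hxC, fun _ _ => rfl⟩
    · rcases le_or_gt γ a with hγa | haγ
      · exact Or.inr ⟨γ, hγa, hd, fun b hγb _ => hz b hγb⟩
      · exact Or.inl (hd.2.2 a haγ)

theorem mk_setOf_eventually_eq_le (hreg : κ.IsRegular) (hpow : (2 : Cardinal.{u}) ^< κ = κ)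
    (γ z : κ.ord.ToType) : #{x : GenBaire κ | ∀ b, γ ≤ b → x b = z} ≤ κ := by
  calc #{x : GenBaire κ | ∀ b, γ ≤ b → x b = z}
      ≤ #(Set.Iio γ → κ.ord.ToType) :=
        Cardinal.mk_le_of_injective (f := fun x b => x.1 b.1) fun x y hxy =>
          Subtype.ext <| funext fun b => (lt_or_ge b γ).elim (fun hb => congrFun hxy ⟨b, hb⟩)
            fun hb => (x.2 b hb).trans (y.2 b hb).symm
    _ = κ ^ #(Set.Iio γ) := by rw [← Cardinal.power_def, Cardinal.mk_ord_toType]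
    _ ≤ κ := power_le_of_isRegular hreg hpow (by simpa using Cardinal.mk_Iio_lt γ)

theorem mk_deadBranches_le (hreg : κ.IsRegular) (hpow : (2 : Cardinal.{u}) ^< κ = κ) :
    #(deadBranches κ C z) ≤ κ := by
  have hsub : deadBranches κ C z ⊆ ⋃ γ, {x : GenBaire κ | ∀ b, γ ≤ b → x b = z} :=
    fun x ⟨γ, _, hz⟩ => Set.mem_iUnion.2 ⟨γ, hz⟩
  calc #(deadBranches κ C z)
        ≤ Cardinal.sum fun γ => #{x : GenBaire κ | ∀ b, γ ≤ b → x b = z} :=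
        (Cardinal.mk_le_mk_of_subset hsub).trans Cardinal.mk_iUnion_le_sum_mk
    _ ≤ Cardinal.sum fun _ : κ.ord.ToType => κ :=
        Cardinal.sum_le_sum _ _ fun γ => mk_setOf_eventually_eq_le hreg hpow γ z
    _ = κ := by
      rw [Cardinal.sum_const', Cardinal.mk_ord_toType, Cardinal.mul_eq_self hreg.aleph0_le]

end DeadBranches

section PiTree

variable {κ : Cardinal.{u}}

def piTree (F : κ.ord.ToType → Set κ.ord.ToType) : Set (TreeSeq κ) :=
  {p | ∀ b, b < p.1 → p.2 b ∈ F b}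

theorem isSuperclosedTree_piTree {F : κ.ord.ToType → Set κ.ord.ToType}
    (hF : ∀ b, (F b).Nonempty) : IsSuperclosedTree κ (piTree F) := by
  classical
  refine ⟨⟨fun a x y hxy => ?_, fun a x hx b hba c hcb => hx c (hcb.trans_le hba)⟩,
    fun a x hx c _ => ?_, fun a ha x hx b hba => ?_⟩
  · exact forall₂_congr fun b hb => show x b ∈ F b ↔ y b ∈ F b by rw [hxy b hb]
  · refine ⟨fun b => if b < a then x b else (hF b).some, fun b hb => if_pos hb, fun b _ => ?_⟩
    show (if b < a then x b else (hF b).some) ∈ F b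
    split_ifs with hba
    exacts [hx b hba, (hF b).some_mem]
  · obtain ⟨c, hbc, hca⟩ := ha.2 b hba
    exact hx c hca b hbc

theorem treeBody_piTree [NoMaxOrder κ.ord.ToType] (F : κ.ord.ToType → Set κ.ord.ToType) :
    TreeBody κ (piTree F) = Set.univ.pi F := by
  ext x
  refine ⟨fun hx b _ => ?_, fun hx a b _ => hx b trivial⟩
  obtain ⟨a, hba⟩ := exists_gt b
  exact hx a b hba

theorem exists_isSuperclosedSet_mk_eq [Nonempty κ.ord.ToType] [NoMaxOrder κ.ord.ToType]
    {μ : Cardinal.{u}} (hμ : μ ≤ κ) :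
    ∃ C : Set (GenBaire κ), IsSuperclosedSet κ C ∧ #C = μ := by
  classical
  rcases eq_or_ne μ 0 with rfl | hμ0
  · exact ⟨∅, ⟨∅, isSuperclosedTree_empty, treeBody_empty.symm⟩, Cardinal.mk_eq_zero _⟩
  obtain ⟨A, hA⟩ := Cardinal.le_mk_iff_exists_set.1 ((Cardinal.mk_ord_toType κ).symm ▸ hμ)
  have hAne : A.Nonempty := Set.nonempty_coe_sort.1 (Cardinal.mk_ne_zero_iff.1 (hA ▸ hμ0))
  let z : κ.ord.ToType := Classical.arbitrary _
  let F : κ.ord.ToType → Set κ.ord.ToType := fun b => if b = z then A else {z}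
  let g : κ.ord.ToType → GenBaire κ := Function.update (fun _ => z) z
  have hpi : Set.univ.pi F = g '' A := by
    ext x
    refine ⟨fun hx => ⟨x z, by simpa [F] using hx z trivial, funext fun b => ?_⟩, ?_⟩
    · by_cases hb : b = z
      · subst hb
        simp [g]
      · simpa [g, F, hb, eq_comm] using hx b trivial
    · rintro ⟨α, hα, rfl⟩ b -
      by_cases hb : b = z
      · subst hb
        simpa [g, F] using hα
      · simp [g, F, hb]
  refine ⟨Set.univ.pi F, ⟨piTree F, isSuperclosedTree_piTree fun b => ?_,
    (treeBody_piTree F).symm⟩, ?_⟩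
  · by_cases hb : b = z
    · simpa [F, hb] using hAne
    · simp [F, hb]
  · have hg : Function.Injective g := Function.update_injective (fun _ : κ.ord.ToType => z) z
    rw [hpi, Cardinal.mk_image_eq hg, hA]

end PiTree

section Absorb

variable {κ : Cardinal.{u}} {X : Type u} [TopologicalSpace X] [T1Space X]

/-- A subset `P ⊆ C` of size `κ` absorbs the at most `κ` new points of `D`; the bijection is the
identity outside `P`. -/
theorem exists_kBorelMeasurable_equiv_of_subset (hκ : ℵ₀ ≤ κ) {C D : Set X} (hCD : C ⊆ D)
    (hC : KBorel κ C) (hD : KBorel κ D) (hsmall : #(D \ C : Set X) ≤ κ) (hbig : κ ≤ #C) :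
    ∃ e : C ≃ D, KBorelMeasurable κ e ∧ KBorelMeasurable κ e.symm := by
  classical
  have h2 : (2 : Cardinal) ≤ κ := Cardinal.natCast_lt_aleph0.le.trans hκ
  obtain ⟨P, hPC, hP⟩ := Cardinal.le_mk_iff_exists_subset.1 hbig
  set W := P ∪ D \ C
  have hW : #W = κ := le_antisymm
    ((Cardinal.mk_union_le _ _).trans
      ((add_le_add hP.le hsmall).trans_eq (Cardinal.add_eq_self hκ)))
    (hP ▸ Cardinal.mk_le_mk_of_subset Set.subset_union_left)
  obtain ⟨φ⟩ := Cardinal.eq.1 (hW.trans hP.symm)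
  have hWD : W ⊆ D := Set.union_subset (hPC.trans hCD) Set.sdiff_subset
  have hdiff : C \ P = D \ W := by
    ext x
    simp only [W, Set.mem_sdiff, Set.mem_union]
    have := @hCD x
    tauto
  let e : C ≃ D := (Equiv.Set.sumDiffSubset hPC).symm.trans
    ((Equiv.sumCongr φ.symm (Equiv.setCongr hdiff)).trans (Equiv.Set.sumDiffSubset hWD))
  refine ⟨e, kBorelMeasurable_of_val_apply_eq_of_notMem h2 hD e hP.le fun x hx => ?_,
    kBorelMeasurable_of_val_apply_eq_of_notMem h2 hC e.symm hW.le fun x hx => ?_⟩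
  · simp [e, Equiv.Set.sumDiffSubset_symm_apply_of_notMem hPC hx]
  · simp [e, Equiv.Set.sumDiffSubset_symm_apply_of_notMem hWD hx]

end Absorb

/-- every closed subset of κ^κ is κ-Borel isomorphic to a superclosed subset. -/
theorem stmt_10 (κ : Cardinal.{u}) (hreg : κ.IsRegular) (hunc : ℵ₀ < κ)
    (hpow : (2 : Cardinal.{u}) ^< κ = κ)
    (C : Set (GenBaire κ)) (hC : IsClosed C) :
    ∃ C' : Set (GenBaire κ), IsSuperclosedSet κ C' ∧
      ∃ e : ↥C ≃ ↥C',
        (∀ S : Set ↥C', KBorel κ S → KBorel κ (e ⁻¹' S)) ∧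
        (∀ S : Set ↥C, KBorel κ S → KBorel κ (e.symm ⁻¹' S)) := by
  have hκ : ℵ₀ ≤ κ := hunc.le
  have : NoMaxOrder κ.ord.ToType := Cardinal.noMaxOrder hκ
  have : Nonempty κ.ord.ToType :=
    Cardinal.mk_ne_zero_iff.1 ((Cardinal.mk_ord_toType κ).symm ▸ hreg.ne_zero)
  rcases le_total #C κ with hsmall | hbig
  · obtain ⟨C', hC', hcard⟩ := exists_isSuperclosedSet_mk_eq hsmall
    obtain ⟨e⟩ := Cardinal.eq.1 hcard.symm
    exact ⟨C', hC', e, kBorelMeasurable_of_mk_le hsmall e,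
      kBorelMeasurable_of_mk_le (hcard.trans_le hsmall) e.symm⟩
  · let z : κ.ord.ToType := Classical.arbitrary _
    have hbody := treeBody_fillTree (z := z) hC
    have hnew : #((C ∪ deadBranches κ C z) \ C : Set (GenBaire κ)) ≤ κ := by
      rw [Set.union_sdiff_left]
      exact (Cardinal.mk_le_mk_of_subset Set.sdiff_subset).trans (mk_deadBranches_le hreg hpow)
    obtain ⟨e, he, he'⟩ := exists_kBorelMeasurable_equiv_of_subset hκ Set.subset_union_left
      (KBorel.of_isClosed hC) (KBorel.of_isClosed (hbody ▸ isClosed_treeBody isTreeOn_fillTree))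
      hnew hbig
    exact ⟨_, ⟨fillTree κ C z, isSuperclosedTree_fillTree, hbody.symm⟩, e, he, he'⟩

end GDST
end

section
/- Let X be a nonempty κ-additive SC_κ-space which is κ-perfect. Then there is a closed subset C ⊆ X such that C with the subspace topology is homeomorphic to the generalized Cantor space 2^κ. -/
universe u v

open Cardinal Set

namespace GDST

/-!
Player I plays the strong `κ`-Choquet game against a winning strategy of player II along every
branch `x ∈ 2^κ` simultaneously. At round `a` player I splits the current position into two
pieces with disjoint closures (possible since, by `κ`-additivity, the position is a nonempty open
set, which has two points by `κ`-perfectness), plays the piece indexed by `x a`, and in doing so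
also shrinks into the `a`-th element of a fixed basis of size `κ` whenever the position meets it.
II's answers along `x` then shrink to a single point `φ x`, and `φ` is a closed embedding of `2^κ`.
-/

open TopologicalSpace Topology Function

section FixBelow

variable {ι β : Type*} [LT ι] [WellFoundedLT ι]

open Classical in
/-- A solution of the recursion `f a = F f a` when `F f a` only depends on `f` below `a`. -/
noncomputable def fixBelow [Nonempty β] (F : (ι → β) → ι → β) : ι → β :=
  wellFounded_lt.fix fun a IH => F (fun b => if h : b < a then IH b h else Classical.arbitrary β) a

theorem fixBelow_eq [Nonempty β] {F : (ι → β) → ι → β}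
    (hF : ∀ f g a, (∀ b < a, f b = g b) → F f a = F g a) (a : ι) :
    fixBelow F a = F (fixBelow F) a := by
  classical
  rw [fixBelow, wellFounded_lt.fix_eq]
  exact hF _ _ a fun b hb => by rw [dif_pos hb]

end FixBelow

theorem exists_greatest_lt_or_forall_exists_between {α : Type*} [LinearOrder α] (a : α) :
    (∃ b < a, ∀ c < a, c ≤ b) ∨ ∀ b < a, ∃ c, b < c ∧ c < a := by
  by_cases h : ∀ b < a, ∃ c, b < c ∧ c < a
  · exact .inr h
  · push Not at h
    obtain ⟨b, hb, hmax⟩ := h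
    exact .inl ⟨b, hb, fun c hc => le_of_not_gt fun hbc => (hmax c hbc).not_gt hc⟩

theorem update_apply_eq_of_le {ι β : Type*} [LinearOrder ι] {f g : ι → β} {a : ι}
    (h : ∀ b < a, f b = g b) (i : β) : ∀ b ≤ a, update f a i b = update g a i b := by
  intro b hb
  rcases hb.lt_or_eq with hb | rfl
  · rw [update_of_ne hb.ne, update_of_ne hb.ne, h b hb]
  · rw [update_self, update_self]

theorem mem_interBelow {ι X : Type u} [LT ι] {V : ι → Set X} {a : ι} {z : X} :
    z ∈ InterBelow V a ↔ ∀ b < a, z ∈ V b :=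
  mem_iInter₂

theorem isOpen_cylinder_s11 {κ : Cardinal.{u}} (x : GenCantor κ) (a : κ.ord.ToType) :
    IsOpen {y : GenCantor κ | ∀ b, b < a → y b = x b} :=
  isOpen_generateFrom_of_mem ⟨a, x, rfl⟩

/-- A Cantor scheme in `X` indexed by `2^κ`: `V x a` is the piece attached to the node `x↾(a+1)`. -/
structure CantorScheme (κ : Cardinal.{u}) (X : Type u) [TopologicalSpace X] where
  V : GenCantor κ → κ.ord.ToType → Set X
  congr {x y : GenCantor κ} {a : κ.ord.ToType} : (∀ b ≤ a, x b = y b) → V x a = V y a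
  closure_subset (x : GenCantor κ) {a b : κ.ord.ToType} : b < a → closure (V x a) ⊆ V x b
  disjoint_closure {x y : GenCantor κ} {a : κ.ord.ToType} :
    (∀ b < a, x b = y b) → x a ≠ y a → Disjoint (closure (V x a)) (closure (V y a))
  isOpen_interBelow (x : GenCantor κ) (a : κ.ord.ToType) : IsOpen (InterBelow (V x) a)
  point : GenCantor κ → X
  point_mem (x : GenCantor κ) (a : κ.ord.ToType) : point x ∈ V x a
  exists_subset_of_mem (x : GenCantor κ) {W : Set X} : IsOpen W → point x ∈ W → ∃ a, V x a ⊆ W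

section CantorScheme

variable {κ : Cardinal.{u}} {X : Type u} [TopologicalSpace X]

namespace CantorScheme

variable (S : CantorScheme κ X)

theorem V_subset_of_le (x : GenCantor κ) {a b : κ.ord.ToType} (h : b ≤ a) : S.V x a ⊆ S.V x b := by
  rcases h.lt_or_eq with h | rfl
  · exact subset_closure.trans (S.closure_subset x h)
  · exact subset_rfl

theorem eq_of_point_mem {x y : GenCantor κ} {a : κ.ord.ToType} (h : S.point y ∈ S.V x a) :
    ∀ b ≤ a, y b = x b := by
  intro b
  induction b using WellFoundedLT.induction with
  | ind b ih =>
    intro hba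
    by_contra hne
    have hagree : ∀ c < b, y c = x c := fun c hc => ih c hc (hc.le.trans hba)
    exact (S.disjoint_closure hagree hne).ne_of_mem (subset_closure (S.point_mem y b))
      (subset_closure (S.V_subset_of_le x hba h)) rfl

theorem point_injective : Injective S.point := fun x y h =>
  funext fun a => S.eq_of_point_mem (y := x) (h ▸ S.point_mem y a) a le_rfl

theorem preimage_point_interBelow (x : GenCantor κ) (a : κ.ord.ToType) :
    S.point ⁻¹' InterBelow (S.V x) a = {y | ∀ b, b < a → y b = x b} := by
  ext y
  simp only [mem_preimage, mem_interBelow]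
  refine ⟨fun h b hb => S.eq_of_point_mem (h b hb) b le_rfl, fun h b hb => ?_⟩
  rw [← S.congr fun c hc => h c (hc.trans_lt hb)]
  exact S.point_mem y b

theorem eq_point_of_forall_mem [T1Space X] {x : GenCantor κ} {z : X} (h : ∀ a, z ∈ S.V x a) :
    z = S.point x := by
  by_contra hne
  obtain ⟨a, ha⟩ := S.exists_subset_of_mem x isOpen_compl_singleton (Ne.symm hne)
  exact ha (h a) rfl

theorem continuous_point [NoMaxOrder κ.ord.ToType] : Continuous S.point := by
  refine continuous_def.2 fun W hW => isOpen_iff_forall_mem_open.2 fun x hx => ?_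
  obtain ⟨a, ha⟩ := S.exists_subset_of_mem x hW hx
  obtain ⟨c, hac⟩ := exists_gt a
  refine ⟨_, fun y hy => ?_, isOpen_cylinder_s11 x c, fun b _ => rfl⟩
  have hV : S.V y a = S.V x a := S.congr fun b hb => hy b (hb.trans_lt hac)
  exact ha (hV ▸ S.point_mem y a)

theorem isEmbedding_point [NoMaxOrder κ.ord.ToType] : IsEmbedding S.point := by
  refine ⟨⟨le_antisymm (continuous_iff_le_induced.1 S.continuous_point) (le_generateFrom ?_)⟩,
    S.point_injective⟩
  rintro _ ⟨a, x, rfl⟩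
  exact S.preimage_point_interBelow x a ▸ isOpen_induced (S.isOpen_interBelow x a)

theorem mem_closure_range_inter_interBelow {x : GenCantor κ} {z : X}
    {a : κ.ord.ToType} (hz : z ∈ closure (range S.point))
    (h : ∀ b < a, z ∈ closure (range S.point ∩ S.V x b)) :
    z ∈ closure (range S.point ∩ InterBelow (S.V x) a) := by
  rcases exists_greatest_lt_or_forall_exists_between a with ⟨b, hb, hmax⟩ | hdense
  · refine closure_mono (inter_subset_inter_right _ fun w hw => ?_) (h b hb)
    exact mem_interBelow.2 fun c hc => S.V_subset_of_le x (hmax c hc) hw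
  · have hzP : z ∈ InterBelow (S.V x) a := mem_interBelow.2 fun b hb => by
      obtain ⟨c, hbc, hca⟩ := hdense b hb
      exact S.closure_subset x hbc (closure_mono inter_subset_right (h c hca))
    rw [inter_comm]
    exact (S.isOpen_interBelow x a).inter_closure ⟨hzP, hz⟩

theorem range_inter_interBelow_subset (x : GenCantor κ) (a : κ.ord.ToType) :
    range S.point ∩ InterBelow (S.V x) a ⊆
      (range S.point ∩ S.V (update x a false) a) ∪ (range S.point ∩ S.V (update x a true) a) := by
  rintro _ ⟨⟨y, rfl⟩, hy⟩
  have hagree : ∀ b < a, y b = x b := by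
    simpa using (S.preimage_point_interBelow x a).le hy
  have hV : S.V y a = S.V (update x a (y a)) a := by
    refine S.congr fun b hb => ?_
    rw [← update_apply_eq_of_le hagree (y a) b hb, update_eq_self (f := (y : κ.ord.ToType → Bool))]
  cases hya : y a
  · exact .inl ⟨mem_range_self y, hya ▸ hV ▸ S.point_mem y a⟩
  · exact .inr ⟨mem_range_self y, hya ▸ hV ▸ S.point_mem y a⟩

theorem isClosed_range [T1Space X] [NoMaxOrder κ.ord.ToType] : IsClosed (range S.point) := by
  classical
  refine closure_subset_iff_isClosed.1 fun z hz => ?_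
  set C := range S.point
  -- the branch of `z`: at each round go right iff `z` is still adherent to the right piece
  obtain ⟨x, hx⟩ : ∃ x : GenCantor κ,
      ∀ a, x a = decide (z ∈ closure (C ∩ S.V (update x a true) a)) :=
    ⟨_, fixBelow_eq (F := fun (f : GenCantor κ) a =>
      decide (z ∈ closure (C ∩ S.V (update f a true) a))) fun f g a h => by
        rw [S.congr (x := update f a true) (y := update g a true)
          (update_apply_eq_of_le h true)]⟩
  have hzx : ∀ a, z ∈ closure (C ∩ S.V x a) := by
    intro a
    induction a using WellFoundedLT.induction with
    | ind a ih =>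
      have hV : S.V x a = S.V (update x a (x a)) a :=
        S.congr fun b _ => by rw [update_eq_self a (x : κ.ord.ToType → Bool)]
      have hsplit := closure_mono (S.range_inter_interBelow_subset x a)
        (S.mem_closure_range_inter_interBelow hz ih)
      rw [closure_union] at hsplit
      rw [hV]
      cases hxa : x a
      · exact hsplit.resolve_right (by simpa [hxa] using hx a)
      · simpa [hxa] using hx a
  have hmem : ∀ a, z ∈ S.V x a := fun a => by
    obtain ⟨c, hac⟩ := exists_gt a
    exact S.closure_subset x hac (closure_mono inter_subset_right (hzx c))
  exact S.eq_point_of_forall_mem hmem ▸ mem_range_self x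

end CantorScheme

theorem CantorScheme.exists_isClosed_homeomorph [T1Space X] [NoMaxOrder κ.ord.ToType]
    (S : CantorScheme κ X) : ∃ C : Set X, IsClosed C ∧ Nonempty (C ≃ₜ GenCantor κ) :=
  ⟨_, S.isClosed_range, ⟨S.isEmbedding_point.toHomeomorph.symm⟩⟩

end CantorScheme

section Target

variable {X : Type*}

open Classical in
noncomputable def target (P E : Set X) : Set X := if (P ∩ E).Nonempty then P ∩ E else P

theorem target_subset_left (P E : Set X) : target P E ⊆ P := by
  unfold target
  split_ifs
  exacts [inter_subset_left, subset_rfl]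

theorem target_subset_right {P E : Set X} (h : (P ∩ E).Nonempty) : target P E ⊆ E := by
  rw [target, if_pos h]
  exact inter_subset_right

theorem nonempty_target {P : Set X} (hP : P.Nonempty) (E : Set X) : (target P E).Nonempty := by
  unfold target
  split_ifs with h
  exacts [h, hP]

theorem isOpen_target [TopologicalSpace X] {P E : Set X} (hP : IsOpen P) (hE : IsOpen E) :
    IsOpen (target P E) := by
  unfold target
  split_ifs
  exacts [hP.inter hE, hP]

end Target

section Game

variable {κ : Cardinal.{u}} {X : Type u}

theorem IsIIStrategy.interBelow_congr {σ : Strategy κ X} (hσ : IsIIStrategy σ)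
    {f g : IMoves κ X} {a : κ.ord.ToType} (h : ∀ b < a, f b = g b) :
    InterBelow (σ f) a = InterBelow (σ g) a := by
  ext z
  simp only [mem_interBelow]
  exact forall₂_congr fun b hb => by rw [hσ f g b fun c hc => h c (hc.trans_lt hb)]

variable [TopologicalSpace X]

theorem KPerfect.nontrivial (hperf : KPerfect κ X) (hκ : 1 < κ) {U : Set X} (hU : IsOpen U)
    (hne : U.Nonempty) : U.Nontrivial := by
  obtain ⟨p, hp⟩ := hne
  by_contra h
  refine hperf p ⟨{U}, by simpa using hκ, by simpa using hU, ?_⟩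
  rw [sInter_singleton]
  exact (not_nontrivial_iff.1 h).eq_singleton_of_mem hp

theorem KAdditive.isOpen_interBelow (hadd : KAdditive κ X) {V : κ.ord.ToType → Set X}
    {a : κ.ord.ToType} (hV : ∀ b < a, IsOpen (V b)) : IsOpen (InterBelow V a) := by
  have hcard : #(V '' Iio a) < κ := mk_image_le.trans_lt (by simpa using mk_Iio_lt a)
  have h := hadd _ hcard (by rintro _ ⟨b, hb, rfl⟩; exact hV b hb)
  rwa [sInter_image] at h

variable {σ : Strategy κ X} {f : IMoves κ X} {a : κ.ord.ToType}

theorem LegalII.subset_interBelow (h : LegalII σ f a) : σ f a ⊆ InterBelow (σ f) a := by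
  obtain ⟨⟨W, -, hW⟩, -⟩ := h
  rw [hW]
  exact inter_subset_right

theorem legalI_of_isOpen (hU : IsOpen (f a).1) (hsub : (f a).1 ⊆ InterBelow (σ f) a)
    (hx : (f a).2 ∈ (f a).1) : LegalI σ f a :=
  ⟨⟨_, hU, (inter_eq_left.2 hsub).symm⟩, hx⟩

theorem KAdditive.isOpen_of_legalBelow (hadd : KAdditive κ X) (hf : LegalBelow σ f a) :
    ∀ b < a, IsOpen (σ f b) := by
  intro b
  induction b using WellFoundedLT.induction with
  | ind b ih =>
    intro hb
    obtain ⟨W, hW, hWb⟩ := (hf b hb).2.1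
    rw [hWb]
    exact hW.inter (hadd.isOpen_interBelow fun c hc => ih c hc (hc.trans hb))

theorem WinningStrong.nonempty_interBelow [Nonempty X] (hwin : WinningStrong σ)
    (hf : LegalBelow σ f a) : (InterBelow (σ f) a).Nonempty := by
  rcases exists_greatest_lt_or_forall_exists_between a with ⟨b, hb, hmax⟩ | hdense
  · have hII := (hf b hb).2
    refine ⟨(f b).2, mem_interBelow.2 fun c hc => ?_⟩
    rcases (hmax c hc).lt_or_eq with hcb | rfl
    · exact mem_interBelow.1 (hII.subset_interBelow hII.2.1) c hcb
    · exact hII.2.1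
  · by_cases hmin : ∃ b, b < a
    · exact hwin.2.2.1 f a ⟨hmin, hdense⟩ hf
    · push Not at hmin
      exact ⟨Classical.arbitrary X, mem_interBelow.2 fun b hb => absurd hb (hmin b).not_gt⟩

def IsSplit (Q : Set X) (s : Bool → Set X × X) : Prop :=
  (∀ i, IsOpen (s i).1 ∧ (s i).2 ∈ (s i).1 ∧ closure (s i).1 ⊆ Q) ∧
    Disjoint (closure (s false).1) (closure (s true).1)

theorem IsSplit.disjoint {Q : Set X} {s : Bool → Set X × X} (h : IsSplit Q s) {i j : Bool}
    (hij : i ≠ j) : Disjoint (closure (s i).1) (closure (s j).1) := by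
  cases i <;> cases j
  exacts [absurd rfl hij, h.2, h.2.symm, absurd rfl hij]

theorem exists_isSplit [T2Space X] [RegularSpace X] {Q : Set X} (hQo : IsOpen Q)
    (hQ : Q.Nontrivial) : ∃ s, IsSplit Q s := by
  obtain ⟨p, hp, q, hq, hpq⟩ := hQ
  obtain ⟨U₀, U₁, hU₀, hU₁, hpU, hqU, hU⟩ := t2_separation hpq
  obtain ⟨V₀, ⟨hpV, hV₀⟩, hV₀sub⟩ :=
    (hasBasis_opens_closure p).mem_iff.1 ((hQo.inter hU₀).mem_nhds ⟨hp, hpU⟩)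
  obtain ⟨V₁, ⟨hqV, hV₁⟩, hV₁sub⟩ :=
    (hasBasis_opens_closure q).mem_iff.1 ((hQo.inter hU₁).mem_nhds ⟨hq, hqU⟩)
  refine ⟨fun i => bif i then (V₁, q) else (V₀, p), fun i => ?_, ?_⟩
  · cases i
    · exact ⟨hV₀, hpV, hV₀sub.trans inter_subset_left⟩
    · exact ⟨hV₁, hqV, hV₁sub.trans inter_subset_left⟩
  · exact hU.mono (hV₀sub.trans inter_subset_right) (hV₁sub.trans inter_subset_right)

variable [Nonempty X]

noncomputable def split (Q : Set X) : Bool → Set X × X := Classical.epsilon (IsSplit Q)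

theorem isSplit_split_target [T2Space X] [RegularSpace X] (hwin : WinningStrong σ)
    (hadd : KAdditive κ X) (hperf : KPerfect κ X) (hκ : 1 < κ) {E : Set X}
    (hE : IsOpen E) (hf : LegalBelow σ f a) :
    IsSplit (target (InterBelow (σ f) a) E) (split (target (InterBelow (σ f) a) E)) := by
  have hQ := isOpen_target (hadd.isOpen_interBelow (hadd.isOpen_of_legalBelow hf)) hE
  exact Classical.epsilon_spec
    (exists_isSplit hQ (hperf.nontrivial hκ hQ (nonempty_target (hwin.nonempty_interBelow hf) E)))

noncomputable def run (σ : Strategy κ X) (e : κ.ord.ToType → Set X) (x : GenCantor κ) :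
    IMoves κ X :=
  fixBelow fun f a => split (target (InterBelow (σ f) a) (e a)) (x a)

variable {e : κ.ord.ToType → Set X}

theorem run_eq (hσ : IsIIStrategy σ) (x : GenCantor κ) (a : κ.ord.ToType) :
    run σ e x a = split (target (InterBelow (σ (run σ e x)) a) (e a)) (x a) :=
  fixBelow_eq (fun _ _ _ h => by rw [hσ.interBelow_congr h]) a

theorem run_congr (hσ : IsIIStrategy σ) {x y : GenCantor κ} (h : ∀ b ≤ a, x b = y b) :
    ∀ b ≤ a, run σ e x b = run σ e y b := by
  intro b
  induction b using WellFoundedLT.induction with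
  | ind b ih =>
    intro hb
    rw [run_eq hσ, run_eq hσ, hσ.interBelow_congr fun c hc => ih c hc (hc.le.trans hb), h b hb]

theorem legal_run [T2Space X] [RegularSpace X] (hwin : WinningStrong σ) (hadd : KAdditive κ X)
    (hperf : KPerfect κ X) (hκ : 1 < κ) (he : ∀ a, IsOpen (e a)) (x : GenCantor κ)
    (a : κ.ord.ToType) : LegalI σ (run σ e x) a ∧ LegalII σ (run σ e x) a := by
  induction a using WellFoundedLT.induction with
  | ind a ih =>
    have hf : LegalBelow σ (run σ e x) a := ih
    obtain ⟨hopen, hmem, hsub⟩ := (isSplit_split_target hwin hadd hperf hκ (he a) hf).1 (x a)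
    rw [← run_eq hwin.1] at hopen hmem hsub
    have hI : LegalI σ (run σ e x) a :=
      legalI_of_isOpen hopen (subset_closure.trans (hsub.trans (target_subset_left _ _))) hmem
    exact ⟨hI, hwin.2.1 _ _ hf hI⟩

theorem strategy_run_subset_split (hσ : IsIIStrategy σ) {x : GenCantor κ}
    (hII : LegalII σ (run σ e x) a) :
    σ (run σ e x) a ⊆ (split (target (InterBelow (σ (run σ e x)) a) (e a)) (x a)).1 := by
  rw [← run_eq hσ]
  exact hII.2.2

theorem WinningStrong.nonempty_cantorScheme [T2Space X] [RegularSpace X]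
    (hwin : WinningStrong σ) (hadd : KAdditive κ X) (hperf : KPerfect κ X) (hκ : 1 < κ)
    (he : IsTopologicalBasis (range e)) : Nonempty (CantorScheme κ X) := by
  have heo : ∀ a, IsOpen (e a) := fun a => he.isOpen (mem_range_self a)
  have hlegal := legal_run hwin hadd hperf hκ heo
  set Q := fun x a => target (InterBelow (σ (run σ e x)) a) (e a)
  have hs : ∀ x a, IsSplit (Q x a) (split (Q x a)) := fun x a =>
    isSplit_split_target hwin hadd hperf hκ (heo a) fun b _ => hlegal x b
  have hcl : ∀ x a, closure (σ (run σ e x) a) ⊆ Q x a := fun x a =>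
    (closure_mono (strategy_run_subset_split hwin.1 (hlegal x a).2)).trans ((hs x a).1 (x a)).2.2
  have hpt : ∀ x, (⋂ a, σ (run σ e x) a).Nonempty := fun x => hwin.2.2.2 _ (hlegal x)
  refine ⟨{ V := fun x => σ (run σ e x),
             congr := fun h => hwin.1 _ _ _ (run_congr hwin.1 h),
             closure_subset := fun x a b hba =>
               (hcl x a).trans ((target_subset_left _ _).trans (iInter₂_subset b hba)),
             disjoint_closure := fun {x y a} h hne => ?_,
             isOpen_interBelow := fun x a =>
               hadd.isOpen_interBelow (hadd.isOpen_of_legalBelow fun b _ => hlegal x b),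
             point := fun x => (hpt x).some,
             point_mem := fun x => mem_iInter.1 (hpt x).some_mem,
             exists_subset_of_mem := fun x W hW hxW => ?_ }⟩
  · have hQxy : Q y a = Q x a := congrArg (target · (e a)) <| hwin.1.interBelow_congr fun c hc =>
      run_congr hwin.1 (fun d hd => (h d (hd.trans_lt hc)).symm) c le_rfl
    refine ((hs x a).disjoint hne).mono
      (closure_mono (strategy_run_subset_split hwin.1 (hlegal x a).2)) (closure_mono ?_)
    exact hQxy ▸ strategy_run_subset_split hwin.1 (hlegal y a).2
  · obtain ⟨_, ⟨j, rfl⟩, hj, hjW⟩ := he.exists_subset_of_mem_open hxW hW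
    have hmeet : (InterBelow (σ (run σ e x)) j ∩ e j).Nonempty :=
      ⟨_, mem_interBelow.2 fun b _ => mem_iInter.1 (hpt x).some_mem b, hj⟩
    exact ⟨j, subset_closure.trans ((hcl x j).trans ((target_subset_right hmeet).trans hjW))⟩

end Game

theorem HasWeightLE.exists_isTopologicalBasis_range {κ : Cardinal.{u}} {X : Type u}
    [TopologicalSpace X] [Nonempty X] (h : HasWeightLE κ X) :
    ∃ e : κ.ord.ToType → Set X, IsTopologicalBasis (range e) := by
  obtain ⟨B, hB, hcard⟩ := h
  obtain ⟨t, htB, -⟩ := hB.exists_subset_of_mem_open (mem_univ (Classical.arbitrary X)) isOpen_univ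
  have : Nonempty B := ⟨⟨t, htB⟩⟩
  obtain ⟨g⟩ : Nonempty (B ↪ κ.ord.ToType) := by rwa [← Cardinal.le_def, mk_ord_toType]
  refine ⟨Subtype.val ∘ invFun g, ?_⟩
  rwa [range_comp, (invFun_surjective g.injective).range_eq, image_univ, Subtype.range_coe]

theorem stmt_11_general (κ : Cardinal.{u}) (hunc : ℵ₀ < κ)
    (X : Type u) [TopologicalSpace X] [T2Space X] [RegularSpace X]
    (hne : Nonempty X) (hadd : KAdditive κ X) (hsc : SCSpace κ X) (hperf : KPerfect κ X) :
    ∃ C : Set X, IsClosed C ∧ Nonempty (↥C ≃ₜ GenCantor κ) := by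
  have : NoMaxOrder κ.ord.ToType := Cardinal.noMaxOrder hunc.le
  obtain ⟨hw, σ, hwin⟩ := hsc
  obtain ⟨e, he⟩ := hw.exists_isTopologicalBasis_range
  obtain ⟨S⟩ := hwin.nonempty_cantorScheme hadd hperf (one_lt_aleph0.trans hunc) he
  exact S.exists_isClosed_homeomorph

/-- a nonempty κ-perfect κ-additive SC_κ-space contains a closed homeomorphic
copy of the generalized Cantor space. -/
theorem stmt_11 (κ : Cardinal.{u}) (hreg : κ.IsRegular) (hunc : ℵ₀ < κ)
    (hpow : (2 : Cardinal.{u}) ^< κ = κ)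
    (X : Type u) [TopologicalSpace X] [T2Space X] [RegularSpace X]
    (hne : Nonempty X) (hadd : KAdditive κ X) (hsc : SCSpace κ X) (hperf : KPerfect κ X) :
    ∃ C : Set X, IsClosed C ∧ Nonempty (↥C ≃ₜ GenCantor κ) :=
  stmt_11_general κ hunc X hne hadd hsc hperf

end GDST
end
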